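/- arXiv:2509.00853 — 8 statements merged into one kernel-verified Lean document; each statement's English description precedes it below -/
import Mathlib

section
/- If a punctured partition (λ,H) has no slidable holes, then there exists a partition μ ⊆ λ such that D(λ,H) = D(μ). -/
/-- A partition recorded by its parts `λ_i = f i` for `i ≥ 1`. -/
def IsPartitionF (f : ℕ → ℕ) : Prop :=
  (∀ i j, 1 ≤ i → i ≤ j → f j ≤ f i) ∧ ∃ N, ∀ i, N < i → f i = 0

/-- The Young diagram `D(λ)` of a partition. -/
def cells (f : ℕ → ℕ) : Set (ℕ × ℕ) := {p | 1 ≤ p.1 ∧ 1 ≤ p.2 ∧ p.2 ≤ f p.1}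

/-- A hole `p ∈ H` of the punctured partition `(λ,H)` is slidable if the cell to its
right or the cell below it belongs to `D(λ,H) = D(λ) \ H`. -/
def Slidable (f : ℕ → ℕ) (H : Set (ℕ × ℕ)) (p : ℕ × ℕ) : Prop :=
  p ∈ H ∧ ((p.1, p.2 + 1) ∈ cells f \ H ∨ (p.1 + 1, p.2) ∈ cells f \ H)

theorem stmt2 (f : ℕ → ℕ) (hf : IsPartitionF f) (H : Set (ℕ × ℕ)) (hH : H ⊆ cells f)
    (hnos : ∀ p, ¬ Slidable f H p) :
    ∃ g : ℕ → ℕ, IsPartitionF g ∧ cells g ⊆ cells f ∧ cells f \ H = cells g := by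
  classical
  obtain ⟨hmono, N, hN⟩ := hf
  -- horizontal closure of holes
  have hor : ∀ r c d, (r, c) ∈ H → c + d ≤ f r → (r, c + d) ∈ H := by
    intro r c d hc hle
    induction d with
    | zero => exact hc
    | succ d ih =>
      have h1 : (r, c + d) ∈ H := ih (by omega)
      have hcell : (r, c + d + 1) ∈ cells f := ⟨(hH hc).1, by omega, show c + d + 1 ≤ f r by omega⟩
      by_contra hnot
      exact hnos (r, c + d) ⟨h1, Or.inl ⟨hcell, hnot⟩⟩
  -- vertical closure of holes
  have ver : ∀ r c d, (r, c) ∈ H → c ≤ f (r + d) → (r + d, c) ∈ H := by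
    intro r c d hc hle
    induction d with
    | zero => exact hc
    | succ d ih =>
      have hr1 : 1 ≤ r := (hH hc).1
      have hle' : c ≤ f (r + d) := le_trans hle (hmono (r + d) (r + d + 1) (by omega) (by omega))
      have h1 : (r + d, c) ∈ H := ih hle'
      have hcell : (r + d + 1, c) ∈ cells f := ⟨by omega, (hH hc).2.1, hle⟩
      by_contra hnot
      exact hnos (r + d, c) ⟨h1, Or.inr ⟨hcell, hnot⟩⟩
  set P : ℕ → ℕ → Prop := fun r c => 0 < c ∧ c ≤ f r ∧ (r, c) ∉ H with hP
  set g : ℕ → ℕ := fun r => Nat.findGreatest (P r) (f r) with hg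
  have hgle : ∀ r, g r ≤ f r := fun r => Nat.findGreatest_le _
  have hgspec : ∀ r, g r ≠ 0 → P r (g r) := fun r h =>
    Nat.findGreatest_of_ne_zero rfl h
  -- membership characterization
  have hmem : ∀ r c, (r, c) ∈ cells f \ H ↔ (1 ≤ r ∧ 1 ≤ c ∧ c ≤ g r) := by
    intro r c
    constructor
    · rintro ⟨⟨hr, hc, hcf⟩, hnH⟩
      exact ⟨hr, hc, Nat.le_findGreatest hcf ⟨hc, hcf, hnH⟩⟩
    · rintro ⟨hr, hc, hcg⟩
      have hg0 : g r ≠ 0 := by omega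
      obtain ⟨-, hgf, hgnH⟩ := hgspec r hg0
      refine ⟨⟨hr, hc, le_trans hcg hgf⟩, fun hcH => ?_⟩
      have := hor r c (g r - c) hcH (by omega)
      rw [show c + (g r - c) = g r by omega] at this
      exact hgnH this
  refine ⟨g, ⟨?_, N, fun i hi => by
      have := hgle i; have := hN i hi; omega⟩, ?_, ?_⟩
  · -- monotone
    intro i j hi hij
    by_cases h0 : g j = 0
    · simp [h0]
    obtain ⟨hpos, hgf, hgnH⟩ := hgspec j h0
    have hgfi : g j ≤ f i := le_trans hgf (hmono i j hi hij)
    refine Nat.le_findGreatest hgfi ⟨hpos, hgfi, fun hH' => ?_⟩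
    have := ver i (g j) (j - i) hH' (by rw [show i + (j - i) = j by omega]; exact hgf)
    rw [show i + (j - i) = j by omega] at this
    exact hgnH this
  · rintro ⟨r, c⟩ ⟨hr, hc, hcg⟩
    exact ⟨hr, hc, le_trans hcg (hgle r)⟩
  · ext ⟨r, c⟩
    exact (hmem r c).trans (by simp [cells])
end

section
/- If a punctured partition (λ,H) has no reversely slidable holes, then there exists a partition ν ⊆ λ such that D(λ,H) = D(λ/ν), the Young diagram of the skew partition λ/ν. -/
/-- A hole `p ∈ H` of the punctured partition `(λ,H)` is reversely slidable if the cell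
to its left or the cell above it belongs to `D(λ,H) = D(λ) \ H`. -/
def RevSlidable (f : ℕ → ℕ) (H : Set (ℕ × ℕ)) (p : ℕ × ℕ) : Prop :=
  p ∈ H ∧ ((p.1, p.2 - 1) ∈ cells f \ H ∨ (p.1 - 1, p.2) ∈ cells f \ H)

theorem stmt3 (f : ℕ → ℕ) (hf : IsPartitionF f) (H : Set (ℕ × ℕ)) (hH : H ⊆ cells f)
    (hnos : ∀ p, ¬ RevSlidable f H p) :
    ∃ g : ℕ → ℕ, IsPartitionF g ∧ cells g ⊆ cells f ∧ cells f \ H = cells f \ cells g := by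
  obtain ⟨hanti, N, hN⟩ := hf
  -- left closure
  have hleft : ∀ r c, (r, c) ∈ H → 2 ≤ c → (r, c - 1) ∈ H := by
    intro r c hrc hc
    obtain ⟨hr, hc, hcf⟩ := hH hrc
    replace hr : 1 ≤ r := hr
    replace hcf : c ≤ f r := hcf
    by_contra hnot
    exact hnos (r, c) ⟨hrc, Or.inl ⟨⟨hr, show 1 ≤ c - 1 by omega,
      show c - 1 ≤ f r by omega⟩, hnot⟩⟩
  -- up closure
  have hup : ∀ r c, (r, c) ∈ H → 2 ≤ r → (r - 1, c) ∈ H := by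
    intro r c hrc hr2
    obtain ⟨hr, hc, hcf⟩ := hH hrc
    replace hc : 1 ≤ c := hc
    replace hcf : c ≤ f r := hcf
    by_contra hnot
    have hmono : f r ≤ f (r - 1) := hanti (r - 1) r (by omega) (by omega)
    exact hnos (r, c) ⟨hrc, Or.inr ⟨⟨show 1 ≤ r - 1 by omega, hc,
      show c ≤ f (r - 1) by omega⟩, hnot⟩⟩
  have hdown : ∀ d r c, (r, c + d) ∈ H → 1 ≤ c → (r, c) ∈ H := by
    intro d
    induction d with
    | zero => intro r c h _; simpa using h
    | succ n ih =>
      intro r c h hc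
      have h' := hleft r (c + (n + 1)) h (by omega)
      have : (r, c + n) ∈ H := by
        have : c + (n + 1) - 1 = c + n := by omega
        rwa [this] at h'
      exact ih r c this hc
  have hupall : ∀ d r c, (r + d, c) ∈ H → 1 ≤ r → (r, c) ∈ H := by
    intro d
    induction d with
    | zero => intro r c h _; simpa using h
    | succ n ih =>
      intro r c h hr
      have h' := hup (r + (n + 1)) c h (by omega)
      have : (r + n, c) ∈ H := by
        have : r + (n + 1) - 1 = r + n := by omega
        rwa [this] at h'
      exact ih r c this hr
  set g : ℕ → ℕ := fun r => sSup {c | (r, c) ∈ H} with hg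
  have hub : ∀ r, f r ∈ upperBounds {c | (r, c) ∈ H} := by
    intro r c hc
    exact (hH hc).2.2
  have hbdd : ∀ r, BddAbove {c | (r, c) ∈ H} := fun r => ⟨f r, hub r⟩
  have hglef : ∀ r, g r ≤ f r := fun r => csSup_le' (hub r)
  have hmemle : ∀ r c, (r, c) ∈ H → c ≤ g r := fun r c hc => le_csSup (hbdd r) hc
  -- H = cells g
  have hHg : H = cells g := by
    ext ⟨r, c⟩
    constructor
    · intro h
      obtain ⟨hr, hc, _⟩ := hH h
      exact ⟨hr, hc, hmemle r c h⟩
    · rintro ⟨hr, hc, hcg⟩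
      replace hr : 1 ≤ r := hr
      replace hc : 1 ≤ c := hc
      replace hcg : c ≤ g r := hcg
      have hne : {c | (r, c) ∈ H}.Nonempty := by
        by_contra hemp
        rw [Set.not_nonempty_iff_eq_empty] at hemp
        have : g r = 0 := by simp [hg, hemp]
        omega
      have htop : (r, g r) ∈ H := Nat.sSup_mem hne (hbdd r)
      have := hdown (g r - c) r c (by
        have : c + (g r - c) = g r := by omega
        rw [this]; exact htop) hc
      exact this
  refine ⟨g, ⟨?_, N, ?_⟩, ?_, by rw [hHg]⟩
  · intro i j hi hij
    refine csSup_le' ?_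
    intro c hc
    have : (i, c) ∈ H := hupall (j - i) i c (by
      have : i + (j - i) = j := by omega
      rwa [this]) hi
    exact hmemle i c this
  · intro i hiN
    have : {c | (i, c) ∈ H} = ∅ := by
      ext c
      simp only [Set.mem_setOf_eq, Set.mem_empty_iff_false, iff_false]
      intro h
      obtain ⟨_, hc, hcf⟩ := hH h
      rw [hN i hiN] at hcf
      omega
    simp [hg, this]
  · rw [← hHg]; exact hH
end

section
/- Let p, q ≥ 0 and u_1 ≤ … ≤ u_p, v_1 ≤ … ≤ v_p, x, y_1 ≤ … ≤ y_q, z_1 ≤ … ≤ z_q be positive integers with u_i < v_i for all i, v_p ≤ x ≤ y_1, and y_j < z_j for all j. Then the words v_1⋯v_p x z_1⋯z_q u_1⋯u_p y_1⋯y_q and v_1⋯v_p z_1⋯z_q u_1⋯u_p x y_1⋯y_q are Knuth equivalent. -/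
/-- Elementary Knuth transformations on three consecutive letters:
(K1) `yzx ↦ yxz` if `x < y ≤ z`; (K2) `xzy ↦ zxy` if `x ≤ y < z`. -/
inductive KnuthStep : List ℕ → List ℕ → Prop
  | K1 (a b : List ℕ) (x y z : ℕ) (h1 : x < y) (h2 : y ≤ z) :
      KnuthStep (a ++ y :: z :: x :: b) (a ++ y :: x :: z :: b)
  | K2 (a b : List ℕ) (x y z : ℕ) (h1 : x ≤ y) (h2 : y < z) :
      KnuthStep (a ++ x :: z :: y :: b) (a ++ z :: x :: y :: b)

/-- Knuth equivalence of words. -/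
def Knuth : List ℕ → List ℕ → Prop := Relation.EqvGen KnuthStep

open List

namespace KnuthAux

lemma knuth_rel {w w' : List ℕ} (h : KnuthStep w w') : Knuth w w' :=
  Relation.EqvGen.rel _ _ h

lemma knuth_refl (w : List ℕ) : Knuth w w := Relation.EqvGen.refl w

lemma knuth_symm {w w' : List ℕ} (h : Knuth w w') : Knuth w' w :=
  Relation.EqvGen.symm _ _ h

lemma knuth_trans {a b c : List ℕ} (h1 : Knuth a b) (h2 : Knuth b c) : Knuth a c :=
  Relation.EqvGen.trans _ _ _ h1 h2

lemma knuthStep_context {w w' : List ℕ} (c d : List ℕ) (h : KnuthStep w w') :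
    KnuthStep (c ++ w ++ d) (c ++ w' ++ d) := by
  cases h with
  | K1 a b x y z h1 h2 =>
    have e1 : c ++ (a ++ y :: z :: x :: b) ++ d = (c ++ a) ++ y :: z :: x :: (b ++ d) := by
      simp
    have e2 : c ++ (a ++ y :: x :: z :: b) ++ d = (c ++ a) ++ y :: x :: z :: (b ++ d) := by
      simp
    rw [e1, e2]
    exact KnuthStep.K1 _ _ _ _ _ h1 h2
  | K2 a b x y z h1 h2 =>
    have e1 : c ++ (a ++ x :: z :: y :: b) ++ d = (c ++ a) ++ x :: z :: y :: (b ++ d) := by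
      simp
    have e2 : c ++ (a ++ z :: x :: y :: b) ++ d = (c ++ a) ++ z :: x :: y :: (b ++ d) := by
      simp
    rw [e1, e2]
    exact KnuthStep.K2 _ _ _ _ _ h1 h2

lemma knuth_context {w w' : List ℕ} (c d : List ℕ) (h : Knuth w w') :
    Knuth (c ++ w ++ d) (c ++ w' ++ d) := by
  induction h with
  | rel _ _ h => exact knuth_rel (knuthStep_context c d h)
  | refl _ => exact knuth_refl _
  | symm _ _ _ ih => exact knuth_symm ih
  | trans _ _ _ _ _ ih1 ih2 => exact knuth_trans ih1 ih2

/-- Move a small letter `b` leftwards through a sorted block `W`, using a left pivot `c`. -/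
lemma moveSmallLeft : ∀ (W : List ℕ) (b c : ℕ), W.Pairwise (· ≤ ·) → b < c → (∀ w ∈ W, c ≤ w) →
    Knuth (c :: (W ++ [b])) (c :: b :: W)
  | [], b, c, _, _, _ => knuth_refl _
  | w :: W, b, c, hs, hbc, hcw => by
    have hcwle : c ≤ w := hcw w (mem_cons_self)
    have hbw : b < w := lt_of_lt_of_le hbc hcwle
    have hsw := pairwise_cons.mp hs
    have ih : Knuth (w :: (W ++ [b])) (w :: b :: W) :=
      moveSmallLeft W b w hsw.2 hbw (fun x hx => hsw.1 x hx)
    have step1 : Knuth (c :: w :: (W ++ [b])) (c :: w :: b :: W) := by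
      have := knuth_context [c] [] ih
      simpa using this
    have step2 : KnuthStep (c :: w :: b :: W) (c :: b :: w :: W) := by
      have := KnuthStep.K1 [] W b c w hbc hcwle
      simpa using this
    exact knuth_trans (by simpa using step1) (knuth_rel step2)

/-- Move a big letter `b` leftwards through a sorted block `W`, using a right pivot `d`. -/
lemma moveBigLeft : ∀ (W : List ℕ) (b d : ℕ), W.Pairwise (· ≤ ·) → (∀ w ∈ W, w ≤ d) → d < b →
    Knuth (W ++ [b, d]) (b :: (W ++ [d]))
  | [], b, d, _, _, _ => knuth_refl _
  | w :: W, b, d, hs, hwd, hdb => by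
    have hsw := pairwise_cons.mp hs
    have ih : Knuth (W ++ [b, d]) (b :: (W ++ [d])) :=
      moveBigLeft W b d hsw.2 (fun x hx => hwd x (mem_cons_of_mem _ hx)) hdb
    have step1 : Knuth (w :: (W ++ [b, d])) (w :: b :: (W ++ [d])) := by
      have := knuth_context [w] [] ih
      simpa using this
    have step2 : KnuthStep (w :: b :: (W ++ [d])) (b :: w :: (W ++ [d])) := by
      cases W with
      | nil =>
        have := KnuthStep.K2 [] [] w d b (hwd w (mem_cons_self)) hdb
        simpa using this
      | cons w' W' =>
        have hww' : w ≤ w' := hsw.1 w' (mem_cons_self)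
        have hw'b : w' < b :=
          lt_of_le_of_lt (hwd w' (mem_cons_of_mem _ (mem_cons_self))) hdb
        have := KnuthStep.K2 [] (W' ++ [d]) w w' b hww' hw'b
        simpa using this
    exact knuth_trans (by simpa using step1) (knuth_rel step2)

lemma forall₂_lt_mem : ∀ {Y Z : List ℕ}, Forall₂ (· < ·) Y Z → ∀ c ∈ Z, ∃ b ∈ Y, b < c := by
  intro Y Z h
  induction h with
  | nil => intro c hc; simp at hc
  | cons hr _ ih =>
    intro c hc
    rcases mem_cons.mp hc with rfl | hc
    · exact ⟨_, mem_cons_self, hr⟩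
    · obtain ⟨b, hb, hbc⟩ := ih c hc
      exact ⟨b, mem_cons_of_mem _ hb, hbc⟩

/-- The `p = 0` case, generalized to a weakly increasing block `X`. -/
lemma gml0 : ∀ {Y Z : List ℕ}, Forall₂ (· < ·) Y Z → ∀ (X : List ℕ),
    X.Pairwise (· ≤ ·) → Y.Pairwise (· ≤ ·) → Z.Pairwise (· ≤ ·) →
    (∀ a ∈ X, ∀ b ∈ Y, a ≤ b) → (∀ a ∈ X, ∀ c ∈ Z, a < c) →
    Knuth (X ++ (Z ++ Y)) (Z ++ (X ++ Y)) := by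
  intro Y Z h
  induction h with
  | nil => intro X _ _ _ _ _; simp; exact knuth_refl _
  | @cons y₁ z₁ Y' Z' hyz hYZ' ih =>
    intro X sX sY sZ hXY hXZ
    have sY' := (pairwise_cons.mp sY).2
    have sZ' := (pairwise_cons.mp sZ).2
    have hy₁Y' := (pairwise_cons.mp sY).1
    have hz₁Z' := (pairwise_cons.mp sZ).1
    -- Step 1: move y₁ left through Z' with pivot z₁.
    have s1 : Knuth (X ++ ((z₁ :: Z') ++ (y₁ :: Y'))) (X ++ ([z₁, y₁] ++ (Z' ++ Y'))) := by
      have m := moveSmallLeft Z' y₁ z₁ sZ' hyz hz₁Z'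
      have := knuth_context X Y' m
      simpa using this
    -- Step 2: move z₁ left through X with pivot y₁.
    have s2 : Knuth (X ++ ([z₁, y₁] ++ (Z' ++ Y'))) (z₁ :: ((X ++ [y₁]) ++ (Z' ++ Y'))) := by
      have m := moveBigLeft X z₁ y₁ sX (fun a ha => hXY a ha y₁ (mem_cons_self)) hyz
      have := knuth_context [] (Z' ++ Y') m
      simpa using this
    -- Step 3: inductive hypothesis with block X ++ [y₁].
    have sX' : (X ++ [y₁]).Pairwise (· ≤ ·) := by
      rw [pairwise_append]
      refine ⟨sX, by simp, ?_⟩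
      intro a ha b hb
      simp only [mem_singleton] at hb
      rw [hb]
      exact hXY a ha y₁ (mem_cons_self)
    have hXY' : ∀ a ∈ X ++ [y₁], ∀ b ∈ Y', a ≤ b := by
      intro a ha b hb
      rcases mem_append.mp ha with ha | ha
      · exact hXY a ha b (mem_cons_of_mem _ hb)
      · simp only [mem_singleton] at ha; subst ha
        exact hy₁Y' b hb
    have hXZ' : ∀ a ∈ X ++ [y₁], ∀ c ∈ Z', a < c := by
      intro a ha c hc
      rcases mem_append.mp ha with ha | ha
      · exact hXZ a ha c (mem_cons_of_mem _ hc)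
      · simp only [mem_singleton] at ha; subst ha
        obtain ⟨b, hb, hbc⟩ := forall₂_lt_mem hYZ' c hc
        exact lt_of_le_of_lt (hy₁Y' b hb) hbc
    have s3 : Knuth (z₁ :: ((X ++ [y₁]) ++ (Z' ++ Y'))) (z₁ :: (Z' ++ ((X ++ [y₁]) ++ Y'))) := by
      have m := ih (X ++ [y₁]) sX' sY' sZ' hXY' hXZ'
      have := knuth_context [z₁] [] m
      simpa using this
    have goal : Knuth (X ++ ((z₁ :: Z') ++ (y₁ :: Y'))) ((z₁ :: Z') ++ (X ++ (y₁ :: Y'))) := by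
      refine knuth_trans s1 (knuth_trans s2 (knuth_trans s3 ?_))
      have e : z₁ :: (Z' ++ ((X ++ [y₁]) ++ Y')) = (z₁ :: Z') ++ (X ++ (y₁ :: Y')) := by simp
      rw [e]; exact knuth_refl _
    exact goal

/-- The general lemma: `V X Z U Y ≡ V Z U X Y`. -/
lemma gml : ∀ {U V : List ℕ}, Forall₂ (· < ·) U V → ∀ (X Y Z : List ℕ),
    X ≠ [] → Forall₂ (· < ·) Y Z →
    X.Pairwise (· ≤ ·) → Y.Pairwise (· ≤ ·) → Z.Pairwise (· ≤ ·) →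
    U.Pairwise (· ≤ ·) → V.Pairwise (· ≤ ·) →
    (∀ v ∈ V, ∀ a ∈ X, v ≤ a) →
    (∀ a ∈ X, ∀ b ∈ Y, a ≤ b) → (∀ a ∈ X, ∀ c ∈ Z, a < c) →
    Knuth (V ++ (X ++ (Z ++ (U ++ Y)))) (V ++ (Z ++ (U ++ (X ++ Y)))) := by
  intro U V h
  induction h with
  | nil =>
    intro X Y Z hX hYZ sX sY sZ _ _ _ hXY hXZ
    have := gml0 hYZ X sX sY sZ hXY hXZ
    simpa using this
  | @cons u₁ v₁ U' V' huv hUV' ih =>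
    intro X Y Z hX hYZ sX sY sZ sU sV hVX hXY hXZ
    have sU' := (pairwise_cons.mp sU).2
    have sV' := (pairwise_cons.mp sV).2
    have hv₁V' := (pairwise_cons.mp sV).1
    -- decompositions of X and V by their last elements
    obtain ⟨X₀, xk, hXd⟩ : ∃ X₀ xk, X = X₀ ++ [xk] := by
      rcases eq_nil_or_concat X with h' | ⟨X₀, xk, h'⟩
      · exact absurd h' hX
      · exact ⟨X₀, xk, by simpa [List.concat_eq_append] using h'⟩
    obtain ⟨V₀, vp, hVd⟩ : ∃ V₀ vp, v₁ :: V' = V₀ ++ [vp] := by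
      rcases eq_nil_or_concat (v₁ :: V') with h' | ⟨V₀, vp, h'⟩
      · simp at h'
      · exact ⟨V₀, vp, by simpa [List.concat_eq_append] using h'⟩
    have hxkX : xk ∈ X := by rw [hXd]; simp
    have hvpV : vp ∈ v₁ :: V' := by rw [hVd]; simp
    have hv₁vp : v₁ ≤ vp := by
      rcases mem_cons.mp hvpV with rfl | h'
      · exact le_refl _
      · exact hv₁V' vp h'
    have hu₁vp : u₁ < vp := lt_of_lt_of_le huv hv₁vp
    have hu₁xk : u₁ < xk :=
      lt_of_lt_of_le huv (le_trans hv₁vp (hVX vp hvpV xk hxkX))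
    have hxkZ : ∀ w ∈ Z, xk ≤ w := fun w hw => le_of_lt (hXZ xk hxkX w hw)
    have hvpZ : ∀ w ∈ Z, vp ≤ w := fun w hw =>
      le_trans (hVX vp hvpV xk hxkX) (hxkZ w hw)
    have hvpX : ∀ a ∈ X, vp ≤ a := fun a ha => hVX vp hvpV a ha
    -- Step 1: move u₁ left through Z with pivot xk.
    have s1 : Knuth ((v₁ :: V') ++ (X ++ (Z ++ ((u₁ :: U') ++ Y))))
        ((v₁ :: V') ++ (X ++ ([u₁] ++ (Z ++ (U' ++ Y))))) := by
      have m := moveSmallLeft Z u₁ xk sZ hu₁xk hxkZ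
      have := knuth_context ((v₁ :: V') ++ X₀) (U' ++ Y) m
      rw [hXd]
      simpa using this
    -- Step 2: move u₁ left through X with pivot vp.
    have s2 : Knuth ((v₁ :: V') ++ (X ++ ([u₁] ++ (Z ++ (U' ++ Y)))))
        ((v₁ :: V') ++ ([u₁] ++ (X ++ (Z ++ (U' ++ Y))))) := by
      have m := moveSmallLeft X u₁ vp sX hu₁vp hvpX
      have := knuth_context V₀ (Z ++ (U' ++ Y)) m
      rw [hVd]
      simpa using this
    -- Step 3: move u₁ left through V' with pivot v₁.
    have s3 : Knuth ((v₁ :: V') ++ ([u₁] ++ (X ++ (Z ++ (U' ++ Y)))))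
        (v₁ :: u₁ :: (V' ++ (X ++ (Z ++ (U' ++ Y))))) := by
      have m := moveSmallLeft V' u₁ v₁ sV' huv hv₁V'
      have := knuth_context [] (X ++ (Z ++ (U' ++ Y))) m
      simpa using this
    -- Step 4: inductive hypothesis inside context [v₁, u₁].
    have s4 : Knuth (v₁ :: u₁ :: (V' ++ (X ++ (Z ++ (U' ++ Y)))))
        (v₁ :: u₁ :: (V' ++ (Z ++ (U' ++ (X ++ Y))))) := by
      have hV'X : ∀ v ∈ V', ∀ a ∈ X, v ≤ a := fun v hv a ha =>
        hVX v (mem_cons_of_mem _ hv) a ha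
      have m := ih X Y Z hX hYZ sX sY sZ sU' sV' hV'X hXY hXZ
      have := knuth_context [v₁, u₁] [] m
      simpa using this
    -- Step 5: move u₁ right through V' with pivot v₁.
    have s5 : Knuth (v₁ :: u₁ :: (V' ++ (Z ++ (U' ++ (X ++ Y)))))
        ((v₁ :: V') ++ ([u₁] ++ (Z ++ (U' ++ (X ++ Y))))) := by
      have m := knuth_symm (moveSmallLeft V' u₁ v₁ sV' huv hv₁V')
      have := knuth_context [] (Z ++ (U' ++ (X ++ Y))) m
      simpa using this
    -- Step 6: move u₁ right through Z with pivot vp.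
    have s6 : Knuth ((v₁ :: V') ++ ([u₁] ++ (Z ++ (U' ++ (X ++ Y)))))
        ((v₁ :: V') ++ (Z ++ ((u₁ :: U') ++ (X ++ Y)))) := by
      have m := knuth_symm (moveSmallLeft Z u₁ vp sZ hu₁vp hvpZ)
      have := knuth_context V₀ (U' ++ (X ++ Y)) m
      rw [hVd]
      simpa using this
    exact knuth_trans s1 (knuth_trans s2 (knuth_trans s3 (knuth_trans s4
      (knuth_trans s5 s6))))

lemma forall₂_ofFn {n : ℕ} (f g : Fin n → ℕ) (h : ∀ i, f i < g i) :
    Forall₂ (· < ·) (ofFn f) (ofFn g) := by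
  induction n with
  | zero => simp
  | succ n ih =>
    rw [ofFn_succ, ofFn_succ]
    exact Forall₂.cons (h 0) (ih _ _ (fun i => h i.succ))

end KnuthAux

theorem stmt4 (p q : ℕ) (u v : Fin p → ℕ) (x : ℕ) (y z : Fin q → ℕ)
    (hupos : ∀ i, 1 ≤ u i) (hvpos : ∀ i, 1 ≤ v i) (hxpos : 1 ≤ x)
    (hypos : ∀ j, 1 ≤ y j) (hzpos : ∀ j, 1 ≤ z j)
    (hu : Monotone u) (hv : Monotone v) (hy : Monotone y) (hz : Monotone z)
    (huv : ∀ i, u i < v i) (hvx : ∀ i, v i ≤ x) (hxy : ∀ j, x ≤ y j)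
    (hyz : ∀ j, y j < z j) :
    Knuth
      (List.ofFn v ++ x :: List.ofFn z ++ List.ofFn u ++ List.ofFn y)
      (List.ofFn v ++ List.ofFn z ++ List.ofFn u ++ x :: List.ofFn y) := by
  have main := KnuthAux.gml (KnuthAux.forall₂_ofFn u v huv) [x] (List.ofFn y) (List.ofFn z)
    (by simp) (KnuthAux.forall₂_ofFn y z hyz)
    (List.pairwise_singleton _ x) hy.sortedLE_ofFn.pairwise hz.sortedLE_ofFn.pairwise hu.sortedLE_ofFn.pairwise hv.sortedLE_ofFn.pairwise
    (by
      intro v' hv' a ha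
      simp only [List.mem_singleton] at ha
      subst ha
      obtain ⟨i, rfl⟩ := List.mem_ofFn.mp hv'
      exact hvx i)
    (by
      intro a ha b hb
      simp only [List.mem_singleton] at ha
      subst ha
      obtain ⟨j, rfl⟩ := List.mem_ofFn.mp hb
      exact hxy j)
    (by
      intro a ha c hc
      simp only [List.mem_singleton] at ha
      subst ha
      obtain ⟨j, rfl⟩ := List.mem_ofFn.mp hc
      exact lt_of_le_of_lt (hxy j) (hyz j))
  simpa using main
end

section
/- The Schensted row-insertion gives a bijection from SST_n(λ) × [n] to the disjoint union over partitions μ ⊇ λ with |μ/λ| = 1 and at most n rows, of SST_n(μ). -/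
/-- Bump `x` into a row: the leftmost entry strictly greater than `x` is replaced by `x`
and returned as the bumped letter; if there is none, `x` is appended at the end. -/
def bumpRow (x : ℕ) : List ℕ → List ℕ × Option ℕ
  | [] => ([x], none)
  | a :: l =>
      if x < a then (x :: l, some a)
      else
        let r := bumpRow x l
        (a :: r.1, r.2)

/-- The Schensted row-insertion `T ← x` on a tableau given as its list of rows. -/
def rowInsert : List (List ℕ) → ℕ → List (List ℕ)
  | [], x => [[x]]
  | R :: rest, x =>
      match bumpRow x R with
      | (R', none) => R' :: rest
      | (R', some y) => R' :: rowInsert rest y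

/-- The shape of a tableau: the list of row lengths. -/
def shape (T : List (List ℕ)) : List ℕ := T.map List.length

/-- `T` is a semistandard tableau with entries in `{1,…,n}`: rows are nonempty and
weakly increasing, row lengths weakly decrease, and columns strictly increase. -/
def IsSSYT (n : ℕ) (T : List (List ℕ)) : Prop :=
  (∀ R ∈ T, R ≠ [] ∧ R.Pairwise (· ≤ ·) ∧ ∀ a ∈ R, 1 ≤ a ∧ a ≤ n) ∧
  (∀ i, (T.getD (i + 1) []).length ≤ (T.getD i []).length) ∧
  (∀ i j, j < (T.getD (i + 1) []).length →
    (T.getD i []).getD j 0 < (T.getD (i + 1) []).getD j 0)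


def revBumpRow (y : ℕ) : List ℕ → Option (List ℕ × ℕ)
  | [] => none
  | a :: l =>
      match revBumpRow y l with
      | some (l', x) => some (a :: l', x)
      | none => if a < y then some (y :: l, a) else none

lemma bumpRow_of_all_le {x : ℕ} : ∀ {R : List ℕ}, (∀ a ∈ R, a ≤ x) → bumpRow x R = (R ++ [x], none)
  | [], _ => rfl
  | a :: l, h => by
    have ha : ¬ x < a := not_lt.2 (h a (by simp))
    simp only [bumpRow, if_neg ha]
    rw [bumpRow_of_all_le (fun b hb => h b (by simp [hb]))]
    simp

lemma bumpRow_eq_none {x : ℕ} : ∀ {R R' : List ℕ}, bumpRow x R = (R', none) →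
    R' = R ++ [x] ∧ ∀ a ∈ R, a ≤ x
  | [], R', h => by
    simp only [bumpRow, Prod.mk.injEq] at h
    simp [← h.1]
  | a :: l, R', h => by
    by_cases hx : x < a
    · simp [bumpRow, if_pos hx] at h
    · simp only [bumpRow, if_neg hx] at h
      rcases hl : bumpRow x l with ⟨L, o⟩
      rw [hl] at h
      injection h with h1 h2
      subst h2
      obtain ⟨e1, e2⟩ := bumpRow_eq_none hl
      constructor
      · simp [← h1, e1]
      · intro b hb; rcases List.mem_cons.1 hb with rfl | hb
        · exact not_lt.1 hx
        · exact e2 b hb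

lemma bumpRow_spec {x y : ℕ} {l2 : List ℕ} : ∀ {l1 : List ℕ}, (∀ a ∈ l1, a ≤ x) → x < y →
    bumpRow x (l1 ++ y :: l2) = (l1 ++ x :: l2, some y)
  | [], _, hy => by simp [bumpRow, if_pos hy]
  | a :: l1, h, hy => by
    have ha : ¬ x < a := not_lt.2 (h a (by simp))
    simp only [List.cons_append, bumpRow, if_neg ha, List.append_eq]
    rw [bumpRow_spec (fun b hb => h b (by simp [hb])) hy]

lemma bumpRow_eq_some {x y : ℕ} : ∀ {R R' : List ℕ}, bumpRow x R = (R', some y) →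
    ∃ l1 l2, R = l1 ++ y :: l2 ∧ R' = l1 ++ x :: l2 ∧ (∀ a ∈ l1, a ≤ x) ∧ x < y
  | [], R', h => by simp [bumpRow] at h
  | a :: l, R', h => by
    by_cases hx : x < a
    · simp only [bumpRow, if_pos hx, Prod.mk.injEq, Option.some.injEq] at h
      exact ⟨[], l, by simp [h.2], by simp [← h.1], by simp, h.2 ▸ hx⟩
    · simp only [bumpRow, if_neg hx] at h
      rcases hl : bumpRow x l with ⟨L, o⟩
      rw [hl] at h
      injection h with h1 h2
      cases o with
      | none => simp at h2
      | some y' =>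
        simp only [Option.some.injEq] at h2; subst h2
        obtain ⟨l1, l2, e1, e2, e3, e4⟩ := bumpRow_eq_some hl
        refine ⟨a :: l1, l2, by simp [e1], by simp [← h1, e2], ?_, e4⟩
        intro b hb; rcases List.mem_cons.1 hb with rfl | hb
        · exact not_lt.1 hx
        · exact e3 b hb

lemma revBumpRow_none {y : ℕ} : ∀ {l : List ℕ}, (∀ a ∈ l, y ≤ a) → revBumpRow y l = none
  | [], _ => rfl
  | a :: l, h => by
    simp only [revBumpRow]
    rw [revBumpRow_none (fun b hb => h b (by simp [hb]))]
    simp [not_lt.2 (h a (by simp))]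

lemma revBumpRow_spec {y x : ℕ} {l2 : List ℕ} (hx : x < y) (h2 : ∀ a ∈ l2, y ≤ a) :
    ∀ {l1 : List ℕ}, revBumpRow y (l1 ++ x :: l2) = some (l1 ++ y :: l2, x)
  | [] => by
    simp only [List.nil_append, revBumpRow]
    rw [revBumpRow_none h2]
    simp [hx]
  | a :: l1 => by
    simp only [List.cons_append, revBumpRow, List.append_eq]
    rw [revBumpRow_spec hx h2 (l1 := l1)]

lemma exists_rev_decomp {y : ℕ} : ∀ {Q : List ℕ}, Q.Pairwise (· ≤ ·) → (∃ a ∈ Q, a < y) →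
    ∃ l1 x l2, Q = l1 ++ x :: l2 ∧ x < y ∧ (∀ b ∈ l2, y ≤ b)
  | [], _, h => by simp at h
  | c :: Q', hs, h => by
    by_cases hex : ∃ b ∈ Q', b < y
    · obtain ⟨l1, x, l2, e1, e2, e3⟩ := exists_rev_decomp hs.of_cons hex
      exact ⟨c :: l1, x, l2, by simp [e1], e2, e3⟩
    · push_neg at hex
      obtain ⟨a, ha, hay⟩ := h
      rcases List.mem_cons.1 ha with rfl | ha
      · exact ⟨[], a, Q', rfl, hay, hex⟩
      · exact absurd (hex a ha) (not_le.2 hay)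


def addBox : List ℕ → ℕ → List ℕ
  | [], _ => [1]
  | a :: l, 0 => (a + 1) :: l
  | a :: l, r + 1 => a :: addBox l r

def diffIdx : List ℕ → List ℕ → ℕ
  | a :: l, b :: s => if a = b then diffIdx l s + 1 else 0
  | _, _ => 0

lemma shape_getD (T : List (List ℕ)) (i : ℕ) : (shape T).getD i 0 = (T.getD i []).length := by
  rcases lt_or_ge i T.length with h | h
  · rw [List.getD_eq_getElem _ _ (by simpa [shape] using h), List.getD_eq_getElem _ _ h]
    simp [shape]
  · rw [List.getD_eq_default _ _ (by simpa [shape] using h), List.getD_eq_default _ _ h]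
    rfl

lemma shape_nil_iff {T : List (List ℕ)} : shape T = [] ↔ T = [] := by
  cases T <;> simp [shape]

lemma shape_cons_iff {T : List (List ℕ)} {b : ℕ} {s : List ℕ} :
    shape T = b :: s ↔ ∃ Q rest, T = Q :: rest ∧ Q.length = b ∧ shape rest = s := by
  cases T with
  | nil => simp [shape]
  | cons Q rest =>
    simp only [shape, List.map_cons, List.cons.injEq]
    constructor
    · rintro ⟨h1, h2⟩; exact ⟨Q, rest, ⟨rfl, rfl⟩, h1, h2⟩
    · rintro ⟨Q', rest', ⟨rfl, rfl⟩, h1, h2⟩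
      exact ⟨h1, h2⟩

lemma ssyt_cons {n : ℕ} {R : List ℕ} {L : List (List ℕ)} :
    IsSSYT n (R :: L) ↔
      (R ≠ [] ∧ R.Pairwise (· ≤ ·) ∧ ∀ a ∈ R, 1 ≤ a ∧ a ≤ n) ∧
      (L.getD 0 []).length ≤ R.length ∧
      (∀ j, j < (L.getD 0 []).length → R.getD j 0 < (L.getD 0 []).getD j 0) ∧
      IsSSYT n L := by
  constructor
  · rintro ⟨h1, h2, h3⟩
    refine ⟨h1 R (by simp), by simpa using h2 0, by simpa using h3 0, ?_, ?_, ?_⟩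
    · exact fun R' hR' => h1 R' (by simp [hR'])
    · intro i; simpa using h2 (i + 1)
    · intro i j hj; simpa using h3 (i + 1) j (by simpa using hj)
  · rintro ⟨hR, hlen, hcol, h1, h2, h3⟩
    refine ⟨?_, ?_, ?_⟩
    · intro R' hR'; rcases List.mem_cons.1 hR' with rfl | hR'
      · exact hR
      · exact h1 R' hR'
    · intro i; cases i with
      | zero => simpa using hlen
      | succ i => simpa using h2 i
    · intro i j hj; cases i with
      | zero => simpa using hcol j (by simpa using hj)
      | succ i => simpa using h3 i j (by simpa using hj)

lemma getD_mem {R : List ℕ} {j : ℕ} (h : j < R.length) : R.getD j 0 ∈ R := by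
  rw [List.getD_eq_getElem _ _ h]; exact List.getElem_mem h

lemma getD_row_mem {T : List (List ℕ)} {i : ℕ} (h : i < T.length) : T.getD i [] ∈ T := by
  rw [List.getD_eq_getElem _ _ h]; exact List.getElem_mem h

lemma ssyt_length_le {n : ℕ} {T : List (List ℕ)} (h : IsSSYT n T) : T.length ≤ n := by
  obtain ⟨h1, h2, h3⟩ := h
  have key : ∀ i, i < T.length → i + 1 ≤ (T.getD i []).getD 0 0 := by
    intro i
    induction i with
    | zero =>
      intro hi
      obtain ⟨hne, _, hb⟩ := h1 _ (getD_row_mem hi)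
      exact (hb _ (getD_mem (List.length_pos_iff.2 hne))).1
    | succ i ih =>
      intro hi
      have hpos : 0 < (T.getD (i + 1) []).length := by
        obtain ⟨hne, _, _⟩ := h1 _ (getD_row_mem hi)
        exact List.length_pos_iff.2 hne
      have := h3 i 0 hpos
      have := ih (Nat.lt_of_succ_lt hi)
      omega
  rcases Nat.eq_zero_or_pos T.length with h0 | h0
  · omega
  · have hi : T.length - 1 < T.length := by omega
    have := key _ hi
    have hmem : (T.getD (T.length - 1) []).getD 0 0 ∈ T.getD (T.length - 1) [] := by
      obtain ⟨hne, _, _⟩ := h1 _ (getD_row_mem hi)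
      exact getD_mem (List.length_pos_iff.2 hne)
    obtain ⟨_, _, hb⟩ := h1 _ (getD_row_mem hi)
    have := (hb _ hmem).2
    omega

lemma addBox_sum : ∀ {s : List ℕ} {r : ℕ}, r ≤ s.length → (addBox s r).sum = s.sum + 1
  | [], 0, _ => by simp [addBox]
  | a :: l, 0, _ => by simp [addBox]; omega
  | a :: l, r + 1, h => by
    simp only [addBox, List.sum_cons]
    rw [addBox_sum (by simpa using h)]
    omega

lemma addBox_getD : ∀ {s : List ℕ} {r : ℕ}, r ≤ s.length →
    ∀ i, (addBox s r).getD i 0 = s.getD i 0 + if i = r then 1 else 0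
  | [], 0, _ => by rintro (_ | i) <;> simp [addBox]
  | a :: l, 0, _ => by rintro (_ | i) <;> simp [addBox]
  | a :: l, r + 1, h => by
    rintro (_ | i)
    · simp [addBox]
    · simp only [addBox, List.getD_cons_succ]
      rw [addBox_getD (by simpa using h) i]
      simp [Nat.succ_inj]
  | [], r + 1, h => by simp at h

lemma addBox_length : ∀ {s : List ℕ} {r : ℕ}, r ≤ s.length →
    (addBox s r).length = if r = s.length then s.length + 1 else s.length
  | [], 0, _ => by simp [addBox]
  | a :: l, 0, _ => by simp [addBox]
  | a :: l, r + 1, h => by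
    simp only [addBox, List.length_cons]
    rw [addBox_length (by simpa using h)]
    by_cases hr : r = l.length <;> simp [hr, Nat.succ_inj]
  | [], r + 1, h => by simp at h

lemma diffIdx_addBox : ∀ {s : List ℕ} {r : ℕ}, r ≤ s.length → diffIdx s (addBox s r) = r
  | [], 0, _ => by simp [addBox, diffIdx]
  | a :: l, 0, _ => by simp [addBox, diffIdx]
  | a :: l, r + 1, h => by
    simp only [addBox, diffIdx, if_pos rfl]
    rw [diffIdx_addBox (by simpa using h)]
    simp
  | [], r + 1, h => by simp at h


def unIns : List (List ℕ) → ℕ → Option (List (List ℕ) × ℕ)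
  | [], _ => none
  | R :: rest, 0 => some ((if R.dropLast = [] then rest else R.dropLast :: rest), R.getLastD 0)
  | R :: rest, r + 1 =>
      match unIns rest r with
      | some (rest', y) =>
          match revBumpRow y R with
          | some (R', x) => some (R' :: rest', x)
          | none => none
      | none => none

lemma getD_append_cons (l1 : List ℕ) (a : ℕ) (l2 : List ℕ) : ∀ (k : ℕ),
    (l1 ++ a :: l2).getD k 0 =
      if k < l1.length then l1.getD k 0 else if k = l1.length then a else l2.getD (k - l1.length - 1) 0 := by
  induction l1 with
  | nil => rintro (_ | k) <;> simp
  | cons c l1 ih =>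
    rintro (_ | k)
    · simp
    · simp only [List.cons_append, List.getD_cons_succ, List.length_cons, ih k]
      by_cases h1 : k < l1.length
      · simp [h1, show k + 1 < l1.length + 1 by omega]
      · by_cases h2 : k = l1.length
        · simp [h1, h2]
        · rw [if_neg h1, if_neg h2, if_neg (show ¬ k + 1 < l1.length + 1 by omega),
            if_neg (show ¬ k + 1 = l1.length + 1 by omega),
            show k + 1 - (l1.length + 1) - 1 = k - l1.length - 1 by omega]

lemma rowInsert_cons_none {x : ℕ} {R R' : List ℕ} {rest : List (List ℕ)}
    (h : bumpRow x R = (R', none)) : rowInsert (R :: rest) x = R' :: rest := by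
  simp [rowInsert, h]

lemma rowInsert_cons_some {x y : ℕ} {R R' : List ℕ} {rest : List (List ℕ)}
    (h : bumpRow x R = (R', some y)) : rowInsert (R :: rest) x = R' :: rowInsert rest y := by
  simp [rowInsert, h]

lemma ssyt_nil {n : ℕ} : IsSSYT n ([] : List (List ℕ)) :=
  ⟨by simp, fun i => by simp, fun i j hj => by simp at hj⟩

def InsFacts (T : List (List ℕ)) (x : ℕ) (C : List (List ℕ)) : Prop :=
  ∃ j, j < (C.getD 0 []).length ∧ (C.getD 0 []).getD j 0 = x ∧
    (∀ k, k ≠ j → (C.getD 0 []).getD k 0 = (T.getD 0 []).getD k 0) ∧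
    ((C.getD 0 []).length = (T.getD 0 []).length ∨
      ((C.getD 0 []).length = (T.getD 0 []).length + 1 ∧ j = (T.getD 0 []).length)) ∧
    (∀ k, k < j → (T.getD 0 []).getD k 0 ≤ x) ∧
    (j < (T.getD 0 []).length → x < (T.getD 0 []).getD j 0) ∧
    (∀ k, j < k → k < (C.getD 0 []).length → x < (C.getD 0 []).getD k 0)

lemma insert_ok {n : ℕ} : ∀ (T : List (List ℕ)) (x : ℕ), IsSSYT n T → 1 ≤ x → x ≤ n →
    IsSSYT n (rowInsert T x) ∧ InsFacts T x (rowInsert T x)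
  | [], x, _, hx1, hx2 => by
    have hC : rowInsert [] x = [[x]] := rfl
    rw [hC]
    constructor
    · rw [ssyt_cons]
      exact ⟨⟨by simp, by simp, by simp [hx1, hx2]⟩, by simp, by simp, ssyt_nil⟩
    · refine ⟨0, ?_⟩
      simp only [List.getD_cons_zero, List.getD_nil]
      refine ⟨by simp, by simp, ?_, Or.inr (by simp), by simp, by simp,
        fun k hk1 hk2 => by simp at hk2; omega⟩
      intro k hk
      match k with
      | 0 => exact absurd rfl hk
      | k + 1 => simp
  | R :: rest, x, hT, hx1, hx2 => by
    obtain ⟨⟨hRne, hRs, hRb⟩, hlen, hcol, hrest⟩ := ssyt_cons.1 hT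
    rcases hb : bumpRow x R with ⟨R', o⟩
    cases o with
    | none =>
      obtain ⟨rfl, hall⟩ := bumpRow_eq_none hb
      rw [rowInsert_cons_none hb]
      have hgd : ∀ k, (R ++ [x]).getD k 0 =
          if k < R.length then R.getD k 0 else if k = R.length then x else 0 := by
        intro k
        rw [show R ++ [x] = R ++ x :: [] from rfl, getD_append_cons]
        simp
      constructor
      · rw [ssyt_cons]
        refine ⟨⟨by simp, ?_, ?_⟩, le_trans hlen (by simp), ?_, hrest⟩
        · rw [List.pairwise_append]
          refine ⟨hRs, by simp, fun a ha b hb' => ?_⟩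
          rw [List.mem_singleton] at hb'; subst hb'; exact hall a ha
        · intro a ha
          rcases List.mem_append.1 ha with h | h
          · exact hRb a h
          · rw [List.mem_singleton] at h; subst h; exact ⟨hx1, hx2⟩
        · intro j hj
          rw [hgd j, if_pos (lt_of_lt_of_le hj hlen)]
          exact hcol j hj
      · refine ⟨R.length, ?_⟩
        simp only [List.getD_cons_zero]
        refine ⟨by simp, by rw [hgd]; simp, ?_, Or.inr (by simp), ?_, ?_, ?_⟩
        · intro k hk
          rw [hgd k]
          by_cases h1 : k < R.length
          · rw [if_pos h1]
          · rw [if_neg h1, if_neg hk, List.getD_eq_default _ _ (by omega)]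
        · intro k hk; exact hall _ (getD_mem hk)
        · intro h; exact absurd h (lt_irrefl _)
        · intro k hk1 hk2; simp at hk2; omega
    | some y =>
      obtain ⟨l1, l2, e1, e2, hl1x, hxy⟩ := bumpRow_eq_some hb
      subst e1; subst e2
      rw [rowInsert_cons_some hb]
      have hy := hRb y (by simp)
      obtain ⟨hs1, hs2, hs12⟩ := List.pairwise_append.1 hRs
      have hyl2 : ∀ b ∈ l2, y ≤ b := (List.pairwise_cons.1 hs2).1
      have hl2pw := (List.pairwise_cons.1 hs2).2
      obtain ⟨hCs, q, hq1, hq2, hq3, hq4, hq5, hq6, hq7⟩ :=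
        insert_ok rest y hrest hy.1 hy.2
      have hRp : (l1 ++ y :: l2).getD l1.length 0 = y := by rw [getD_append_cons]; simp
      have hR'p : (l1 ++ x :: l2).getD l1.length 0 = x := by rw [getD_append_cons]; simp
      have hRlen : (l1 ++ y :: l2).length = l1.length + l2.length + 1 := by simp; omega
      have hR'len : (l1 ++ x :: l2).length = l1.length + l2.length + 1 := by simp; omega
      have hRR' : ∀ k, k ≠ l1.length → (l1 ++ x :: l2).getD k 0 = (l1 ++ y :: l2).getD k 0 := by
        intro k hk
        rw [getD_append_cons, getD_append_cons]
        by_cases h : k < l1.length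
        · simp [h]
        · simp [h, hk]
      have hRlt : ∀ k, k < l1.length → (l1 ++ y :: l2).getD k 0 ≤ x := by
        intro k hk
        rw [getD_append_cons, if_pos hk]
        exact hl1x _ (getD_mem hk)
      have hqO : q ≤ (rest.getD 0 []).length := by
        rcases hq4 with h | ⟨h, h'⟩ <;> omega
      have hqp : q ≤ l1.length := by
        by_contra hqp
        push_neg at hqp
        have hpO : l1.length < (rest.getD 0 []).length := lt_of_lt_of_le hqp hqO
        have h5 := hq5 l1.length hqp
        have hc := hcol l1.length hpO
        rw [hRp] at hc
        omega
      have hplt : l1.length < (l1 ++ y :: l2).length := by omega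
      have hFR : ((rowInsert rest y).getD 0 []).length ≤ (l1 ++ x :: l2).length := by
        rcases hq4 with h | ⟨h, h'⟩
        · omega
        · have : q < (l1 ++ y :: l2).length := lt_of_le_of_lt hqp hplt
          omega
      have hcols : ∀ j, j < ((rowInsert rest y).getD 0 []).length →
          (l1 ++ x :: l2).getD j 0 < ((rowInsert rest y).getD 0 []).getD j 0 := by
        intro j hj
        rcases eq_or_ne j q with rfl | hjq
        · rw [hq2]
          rcases eq_or_ne j l1.length with rfl | hjp
          · rw [hR'p]; exact hxy
          · have hjp' : j < l1.length := lt_of_le_of_ne hqp hjp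
            rw [getD_append_cons, if_pos hjp']
            have := hl1x _ (getD_mem hjp')
            omega
        · rcases eq_or_ne j l1.length with rfl | hjp
          · have hqp' : q < l1.length := lt_of_le_of_ne hqp (Ne.symm hjq)
            have := hq7 l1.length hqp' hj
            rw [hR'p]
            omega
          · have hFO := hq3 j hjq
            have hjO : j < (rest.getD 0 []).length := by
              rcases hq4 with h | ⟨h, h'⟩ <;> omega
            have hRO := hcol j hjO
            rw [hRR' j hjp, hFO]
            exact hRO
      constructor
      · rw [ssyt_cons]
        refine ⟨⟨by simp, ?_, ?_⟩, hFR, hcols, hCs⟩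
        · rw [List.pairwise_append]
          refine ⟨hs1, ?_, ?_⟩
          · rw [List.pairwise_cons]
            exact ⟨fun b hb' => le_of_lt (lt_of_lt_of_le hxy (hyl2 b hb')), hl2pw⟩
          · intro a ha b hb'
            rcases List.mem_cons.1 hb' with rfl | hb'
            · exact hl1x a ha
            · exact le_trans (hl1x a ha) (le_of_lt (lt_of_lt_of_le hxy (hyl2 b hb')))
        · intro a ha
          rcases List.mem_append.1 ha with h | h
          · exact hRb a (by simp [h])
          · rcases List.mem_cons.1 h with rfl | h
            · exact ⟨hx1, hx2⟩
            · exact hRb a (by simp [h])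
      · refine ⟨l1.length, ?_⟩
        simp only [List.getD_cons_zero]
        refine ⟨by omega, hR'p, hRR', Or.inl (by omega), hRlt, ?_, ?_⟩
        · intro _; rw [hRp]; exact hxy
        · intro k hk1 hk2
          rw [getD_append_cons, if_neg (by omega), if_neg (by omega)]
          have hmem : l2.getD (k - l1.length - 1) 0 ∈ l2 := getD_mem (by omega)
          have := hyl2 _ hmem
          omega

lemma uninsert_insert : ∀ (T : List (List ℕ)) (x : ℕ), (∀ R ∈ T, R ≠ [] ∧ R.Pairwise (· ≤ ·)) →
    ∃ r, r ≤ T.length ∧ shape (rowInsert T x) = addBox (shape T) r ∧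
      unIns (rowInsert T x) r = some (T, x)
  | [], x, _ => by
    refine ⟨0, by simp, by simp [rowInsert, shape, addBox], ?_⟩
    simp [rowInsert, unIns]
  | R :: rest, x, h => by
    obtain ⟨hRne, hRs⟩ := h R (by simp)
    rcases hb : bumpRow x R with ⟨R', o⟩
    cases o with
    | none =>
      obtain ⟨rfl, hall⟩ := bumpRow_eq_none hb
      refine ⟨0, by simp, ?_, ?_⟩
      · rw [rowInsert_cons_none hb]
        simp [shape, addBox]
      · rw [rowInsert_cons_none hb]
        simp [unIns, List.dropLast_concat, hRne, List.getLastD_concat]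
    | some y =>
      obtain ⟨l1, l2, e1, e2, hl1x, hxy⟩ := bumpRow_eq_some hb
      have hyl2 : ∀ b ∈ l2, y ≤ b := by
        rw [e1, List.pairwise_append] at hRs
        exact (List.pairwise_cons.1 hRs.2.1).1
      obtain ⟨r', hr'le, hsh, hun⟩ := uninsert_insert rest y (fun Q hQ => h Q (by simp [hQ]))
      refine ⟨r' + 1, by simp [Nat.succ_le_succ hr'le], ?_, ?_⟩
      · rw [rowInsert_cons_some hb]
        have hlen : R'.length = R.length := by rw [e1, e2]; simp
        simp only [shape, List.map_cons, addBox, hlen]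
        rw [show List.map List.length (rowInsert rest y) = shape (rowInsert rest y) from rfl,
          hsh]
        rfl
      · rw [rowInsert_cons_some hb]
        have hrev : revBumpRow y R' = some (R, x) := by
          rw [e2, revBumpRow_spec hxy hyl2, ← e1]
        simp [unIns, hun, hrev]

lemma sum_le_of_getD_le : ∀ (l t : List ℕ), (∀ i, l.getD i 0 ≤ t.getD i 0) → l.sum ≤ t.sum
  | [], _, _ => by simp
  | a :: l, [], h => by
    have h0 := h 0
    have hrest := sum_le_of_getD_le l [] (fun i => by simpa using h (i + 1))
    simp at h0 hrest ⊢
    omega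
  | a :: l, b :: t, h => by
    have h0 := h 0
    have hrest := sum_le_of_getD_le l t (fun i => by simpa using h (i + 1))
    simp at h0 ⊢
    omega

lemma eq_of_getD_le : ∀ (l t : List ℕ), (∀ a ∈ t, 1 ≤ a) → (∀ a ∈ l, 1 ≤ a) →
    (∀ i, l.getD i 0 ≤ t.getD i 0) → t.sum = l.sum → t = l
  | [], [], _, _, _, _ => rfl
  | [], b :: t, ht, _, _, hsum => by
    have := ht b (by simp)
    have : b + t.sum = 0 := by simpa using hsum
    omega
  | a :: l, [], _, hl, hle, _ => by
    have := hl a (by simp)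
    have := hle 0
    simp at this
    omega
  | a :: l, b :: t, ht, hl, hle, hsum => by
    have h0 : a ≤ b := by simpa using hle 0
    have hrest : ∀ i, l.getD i 0 ≤ t.getD i 0 := fun i => by simpa using hle (i + 1)
    have hsumle := sum_le_of_getD_le l t hrest
    simp only [List.sum_cons] at hsum
    have hb : b = a := by omega
    subst hb
    rw [eq_of_getD_le l t (fun c hc => ht c (by simp [hc])) (fun c hc => hl c (by simp [hc]))
      hrest (by omega)]

lemma addBox_of : ∀ (lam s : List ℕ), (∀ a ∈ s, 1 ≤ a) → (∀ a ∈ lam, 1 ≤ a) →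
    (∀ i, lam.getD i 0 ≤ s.getD i 0) → s.sum = lam.sum + 1 →
    ∃ r, r ≤ lam.length ∧ s = addBox lam r
  | [], [], _, _, _, hsum => by simp at hsum
  | [], b :: s, hs, _, _, hsum => by
    refine ⟨0, by simp, ?_⟩
    have hb := hs b (by simp)
    cases s with
    | nil =>
      simp at hsum
      simp [addBox, hsum]
    | cons c s =>
      have := hs c (by simp)
      simp at hsum
      omega
  | a :: lam, [], _, hlam, hle, _ => by
    have := hlam a (by simp)
    have := hle 0
    simp at this
    omega
  | a :: lam, b :: s, hs, hlam, hle, hsum => by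
    have h0 : a ≤ b := by simpa using hle 0
    have hrest : ∀ i, lam.getD i 0 ≤ s.getD i 0 := fun i => by simpa using hle (i + 1)
    simp only [List.sum_cons] at hsum
    rcases eq_or_lt_of_le h0 with rfl | hab
    · obtain ⟨r, hr, hbox⟩ := addBox_of lam s (fun c hc => hs c (by simp [hc]))
        (fun c hc => hlam c (by simp [hc])) hrest (by omega)
      exact ⟨r + 1, by simpa using hr, by simp [addBox, hbox]⟩
    · have hsumle := sum_le_of_getD_le lam s hrest
      have hb : b = a + 1 := by omega
      have hseq : s = lam := eq_of_getD_le lam s (fun c hc => hs c (by simp [hc]))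
        (fun c hc => hlam c (by simp [hc])) hrest (by omega)
      exact ⟨0, by simp, by simp [addBox, hb, hseq]⟩

lemma getD_dropLast {Q : List ℕ} {j : ℕ} (h : j < Q.dropLast.length) :
    Q.dropLast.getD j 0 = Q.getD j 0 := by
  rw [List.getD_eq_getElem _ _ h,
    List.getD_eq_getElem _ _ (lt_of_lt_of_le h (by rw [List.length_dropLast]; omega)),
    List.getElem_dropLast]

lemma uninsert_correct {n : ℕ} : ∀ (r : ℕ) (lam : List ℕ) (S : List (List ℕ)),
    lam.Pairwise (· ≥ ·) → (∀ a ∈ lam, 1 ≤ a) → IsSSYT n S → shape S = addBox lam r →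
    r ≤ lam.length →
    ∃ T x, unIns S r = some (T, x) ∧ IsSSYT n T ∧ shape T = lam ∧ 1 ≤ x ∧ x ≤ n ∧
      rowInsert T x = S
  | 0, [], S, _, _, hS, hsh, _ => by
    obtain ⟨Q, rest, rfl, hQlen, hshr⟩ := shape_cons_iff.1 hsh
    obtain ⟨y, rfl⟩ := List.length_eq_one_iff.1 hQlen
    have hrest : rest = [] := shape_nil_iff.1 hshr
    subst hrest
    obtain ⟨⟨_, _, hQb⟩, _, _, _⟩ := ssyt_cons.1 hS
    have hy := hQb y (by simp)
    exact ⟨[], y, by simp [unIns], ssyt_nil, rfl, hy.1, hy.2, rfl⟩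
  | 0, a :: lam', S, hlam, hpos, hS, hsh, _ => by
    obtain ⟨Q, rest, rfl, hQlen, hshr⟩ := shape_cons_iff.1 hsh
    obtain ⟨⟨hQne, hQs, hQb⟩, hlen, hcol, hrest⟩ := ssyt_cons.1 hS
    have ha : 1 ≤ a := hpos a (by simp)
    have hdl : Q.dropLast.length = a := by rw [List.length_dropLast, hQlen]; omega
    have hdropne : Q.dropLast ≠ [] := by
      intro h; rw [h] at hdl; simp at hdl; omega
    have hQd : Q.dropLast ++ [Q.getLast hQne] = Q := List.dropLast_append_getLast hQne
    have hgd : Q.getLastD 0 = Q.getLast hQne := by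
      conv_lhs => rw [← hQd]
      rw [List.getLastD_concat]
    have hx := hQb _ (Q.getLast_mem hQne)
    have hall : ∀ b ∈ Q.dropLast, b ≤ Q.getLast hQne := by
      intro b hb
      have := hQs
      rw [← hQd, List.pairwise_append] at this
      exact this.2.2 b hb _ (by simp)
    have hlam0 : lam'.getD 0 0 ≤ a := by
      by_cases h : 0 < lam'.length
      · exact List.rel_of_pairwise_cons hlam (getD_mem h)
      · rw [List.getD_eq_default _ _ (by omega)]; omega
    have hrlen : (rest.getD 0 []).length ≤ a := by
      have := shape_getD rest 0
      rw [hshr] at this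
      omega
    refine ⟨Q.dropLast :: rest, Q.getLast hQne, ?_, ?_, ?_, hx.1, hx.2, ?_⟩
    · simp [unIns, if_neg hdropne, hgd, List.getLast?_eq_getLast hQne]
    · rw [ssyt_cons]
      refine ⟨⟨hdropne, List.Pairwise.sublist (List.dropLast_sublist Q) hQs,
        fun b hb => hQb b ((List.dropLast_sublist Q).subset hb)⟩, by omega, ?_, hrest⟩
      intro j hj
      rw [getD_dropLast (by omega)]
      exact hcol j hj
    · simp only [shape, List.map_cons]
      rw [show List.map List.length rest = shape rest from rfl, hshr, hdl]
    · rw [rowInsert_cons_none (bumpRow_of_all_le hall), hQd]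
  | r + 1, [], S, _, _, _, _, hr => by simp at hr
  | r + 1, a :: lam', S, hlam, hpos, hS, hsh, hr => by
    obtain ⟨Q, rest, rfl, hQlen, hshr⟩ := shape_cons_iff.1 (by simpa [addBox] using hsh)
    obtain ⟨⟨hQne, hQs, hQb⟩, hlen, hcol, hrest⟩ := ssyt_cons.1 hS
    obtain ⟨T', y, hun, hT's, hshT', hy1, hy2, hins⟩ :=
      uninsert_correct r lam' rest (List.pairwise_cons.1 hlam).2
        (fun b hb => hpos b (by simp [hb])) hrest hshr (by simpa using hr)
    obtain ⟨_, q, hq1, hq2, hq3, hq4, hq5, hq6, hq7⟩ := insert_ok T' y hT's hy1 hy2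
    rw [hins] at hq1 hq2 hq3 hq4 hq7
    have hOF : (T'.getD 0 []).length ≤ (rest.getD 0 []).length := by
      rcases hq4 with h | ⟨h, _⟩ <;> omega
    have hFQ : (rest.getD 0 []).length ≤ Q.length := hlen
    have hcolq : Q.getD q 0 < y := by
      have := hcol q hq1
      rwa [hq2] at this
    have hex : ∃ b ∈ Q, b < y := ⟨Q.getD q 0, getD_mem (by omega), hcolq⟩
    obtain ⟨l1, x, l2, eQ, hxy, hyl2⟩ := exists_rev_decomp hQs hex
    rw [eQ] at hQs
    obtain ⟨hs1, hs2, hs12⟩ := List.pairwise_append.1 hQs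
    have hxl2 : ∀ b ∈ l2, x ≤ b := (List.pairwise_cons.1 hs2).1
    have hl2pw := (List.pairwise_cons.1 hs2).2
    have hl1x : ∀ b ∈ l1, b ≤ x := fun b hb => hs12 b hb x (by simp)
    have hQlen2 : Q.length = l1.length + l2.length + 1 := by rw [eQ]; simp; omega
    have hQp : Q.getD l1.length 0 = x := by rw [eQ, getD_append_cons]; simp
    have hQ'p : (l1 ++ y :: l2).getD l1.length 0 = y := by rw [getD_append_cons]; simp
    have hQQ' : ∀ k, k ≠ l1.length → (l1 ++ y :: l2).getD k 0 = Q.getD k 0 := by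
      intro k hk
      rw [eQ, getD_append_cons, getD_append_cons]
      by_cases h : k < l1.length
      · simp [h]
      · simp [h, hk]
    have hqp : q ≤ l1.length := by
      by_contra hqp
      push_neg at hqp
      have : Q.getD q 0 = l2.getD (q - l1.length - 1) 0 := by
        rw [eQ, getD_append_cons, if_neg (by omega), if_neg (by omega)]
      have hmem : l2.getD (q - l1.length - 1) 0 ∈ l2 := getD_mem (by omega)
      have := hyl2 _ hmem
      omega
    have hx := hQb x (by rw [eQ]; simp)
    have hQ'len : (l1 ++ y :: l2).length = Q.length := by rw [eQ]; simp
    have hrev : revBumpRow y Q = some (l1 ++ y :: l2, x) := by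
      rw [eQ, revBumpRow_spec hxy hyl2]
    refine ⟨(l1 ++ y :: l2) :: T', x, ?_, ?_, ?_, hx.1, hx.2, ?_⟩
    · simp [unIns, hun, hrev]
    · rw [ssyt_cons]
      refine ⟨⟨by simp, ?_, ?_⟩, by omega, ?_, hT's⟩
      · rw [List.pairwise_append]
        refine ⟨hs1, ?_, ?_⟩
        · rw [List.pairwise_cons]
          exact ⟨hyl2, hl2pw⟩
        · intro b hb c hc
          rcases List.mem_cons.1 hc with rfl | hc
          · exact le_of_lt (lt_of_le_of_lt (hl1x b hb) hxy)
          · exact le_trans (hl1x b hb) (le_trans (le_of_lt hxy) (hyl2 c hc))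
      · intro b hb
        rcases List.mem_append.1 hb with h | h
        · exact hQb b (by rw [eQ]; simp [h])
        · rcases List.mem_cons.1 h with rfl | h
          · exact ⟨hy1, hy2⟩
          · exact hQb b (by rw [eQ]; simp [h])
      · intro j hj
        rcases eq_or_ne j l1.length with rfl | hjp
        · rw [hQ'p]
          rcases eq_or_ne q l1.length with hqe | hqe
          · have := hq6 (by omega)
            rw [← hqe]
            omega
          · have hqlt : q < l1.length := lt_of_le_of_ne hqp hqe
            have hpF : l1.length < (rest.getD 0 []).length := by omega
            have h7 := hq7 l1.length hqlt hpF
            have h3 := hq3 l1.length (Ne.symm hqe)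
            omega
        · rcases eq_or_ne j q with rfl | hjq
          · have h6 := hq6 hj
            rw [hQQ' j hjp]
            omega
          · have h3 := hq3 j hjq
            have := hcol j (by omega)
            rw [hQQ' j hjp]
            omega
    · simp only [shape, List.map_cons]
      rw [show List.map List.length T' = shape T' from rfl, hshT']
      simp
      omega
    · rw [rowInsert_cons_some (bumpRow_spec hl1x hxy), ← eQ, hins]

theorem stmt7 (n : ℕ) (lam : List ℕ) (hlam : lam.Pairwise (· ≥ ·)) (hpos : ∀ a ∈ lam, 1 ≤ a) :
    Set.BijOn (fun p : List (List ℕ) × ℕ => rowInsert p.1 p.2)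
      {p | IsSSYT n p.1 ∧ shape p.1 = lam ∧ 1 ≤ p.2 ∧ p.2 ≤ n}
      {S | IsSSYT n S ∧ S.length ≤ n ∧
        (shape S).sum = lam.sum + 1 ∧
        ∀ i, lam.getD i 0 ≤ (shape S).getD i 0} := by
  set g : List (List ℕ) → List (List ℕ) × ℕ :=
    fun S => (unIns S (diffIdx lam (shape S))).getD ([], 0) with hg
  have hlamlen : ∀ {T : List (List ℕ)}, shape T = lam → T.length = lam.length := by
    intro T h; rw [← h]; simp [shape]
  have key : ∀ S ∈ {S | IsSSYT n S ∧ S.length ≤ n ∧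
      (shape S).sum = lam.sum + 1 ∧ ∀ i, lam.getD i 0 ≤ (shape S).getD i 0},
      ∃ T x, g S = (T, x) ∧ IsSSYT n T ∧ shape T = lam ∧ 1 ≤ x ∧ x ≤ n ∧ rowInsert T x = S := by
    rintro S ⟨hS, _, hsum, hge⟩
    have hshpos : ∀ a ∈ shape S, 1 ≤ a := by
      intro a ha
      simp only [shape, List.mem_map] at ha
      obtain ⟨R, hR, rfl⟩ := ha
      exact List.length_pos_iff.2 (hS.1 R hR).1
    obtain ⟨r, hrle, hsheq⟩ := addBox_of lam (shape S) hshpos hpos hge hsum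
    have hd : diffIdx lam (shape S) = r := by rw [hsheq]; exact diffIdx_addBox hrle
    obtain ⟨T, x, hun, hTs, hshT, hx1, hx2, hins⟩ :=
      uninsert_correct r lam S hlam hpos hS hsheq hrle
    refine ⟨T, x, ?_, hTs, hshT, hx1, hx2, hins⟩
    rw [hg]
    simp only [hd, hun, Option.getD_some]
  have hmf : Set.MapsTo (fun p : List (List ℕ) × ℕ => rowInsert p.1 p.2)
      {p | IsSSYT n p.1 ∧ shape p.1 = lam ∧ 1 ≤ p.2 ∧ p.2 ≤ n}
      {S | IsSSYT n S ∧ S.length ≤ n ∧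
        (shape S).sum = lam.sum + 1 ∧ ∀ i, lam.getD i 0 ≤ (shape S).getD i 0} := by
    rintro ⟨T, x⟩ ⟨hT, hsh, hx1, hx2⟩
    obtain ⟨hC, _⟩ := insert_ok T x hT hx1 hx2
    obtain ⟨r, hrle, hshC, _⟩ :=
      uninsert_insert T x (fun R hR => ⟨(hT.1 R hR).1, (hT.1 R hR).2.1⟩)
    rw [hsh] at hshC
    have hrlam : r ≤ lam.length := by rw [← hlamlen hsh]; exact hrle
    refine ⟨hC, ssyt_length_le hC, ?_, ?_⟩
    · rw [hshC, addBox_sum hrlam]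
    · intro i
      rw [hshC, addBox_getD hrlam]
      exact Nat.le_add_right _ _
  have hleft : Set.LeftInvOn g (fun p : List (List ℕ) × ℕ => rowInsert p.1 p.2)
      {p | IsSSYT n p.1 ∧ shape p.1 = lam ∧ 1 ≤ p.2 ∧ p.2 ≤ n} := by
    rintro ⟨T, x⟩ ⟨hT, hsh, hx1, hx2⟩
    obtain ⟨r, hrle, hshC, hunC⟩ :=
      uninsert_insert T x (fun R hR => ⟨(hT.1 R hR).1, (hT.1 R hR).2.1⟩)
    have hrlam : r ≤ lam.length := by rw [← hlamlen hsh]; exact hrle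
    have hd : diffIdx lam (shape (rowInsert T x)) = r := by
      rw [hshC, hsh]; exact diffIdx_addBox hrlam
    show g (rowInsert T x) = (T, x)
    rw [hg]
    simp only [hd, hunC, Option.getD_some]
  have hright : Set.RightInvOn g (fun p : List (List ℕ) × ℕ => rowInsert p.1 p.2)
      {S | IsSSYT n S ∧ S.length ≤ n ∧
        (shape S).sum = lam.sum + 1 ∧ ∀ i, lam.getD i 0 ≤ (shape S).getD i 0} := by
    intro S hS
    obtain ⟨T, x, hgS, _, _, _, _, hins⟩ := key S hS
    show rowInsert (g S).1 (g S).2 = S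
    rw [hgS]
    exact hins
  have hmg : Set.MapsTo g
      {S | IsSSYT n S ∧ S.length ≤ n ∧
        (shape S).sum = lam.sum + 1 ∧ ∀ i, lam.getD i 0 ≤ (shape S).getD i 0}
      {p | IsSSYT n p.1 ∧ shape p.1 = lam ∧ 1 ≤ p.2 ∧ p.2 ≤ n} := by
    intro S hS
    obtain ⟨T, x, hgS, hTs, hshT, hx1, hx2, _⟩ := key S hS
    rw [hgS]
    exact ⟨hTs, hshT, hx1, hx2⟩
  exact Set.InvOn.bijOn ⟨hleft, hright⟩ hmf hmg
end

section
/- Let T be a symplectic tableau of shape ν with entries in [2n], x ∈ [2n], and let (x_1,…,x_r) be the row-inserting letters for the Schensted insertion (T,x). If x_i ≥ 2i−1 for all i ∈ [r], then T ← x is symplectic. -/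
open scoped Classical

/-- A punctured tableau of shape `(λ,H)`, recorded as a function `T : ℕ×ℕ → ℕ` which
takes positive values exactly on `D(λ,H) = D(λ) \ H` (and `0` elsewhere). -/
def PTab (f : ℕ → ℕ) (H : Set (ℕ × ℕ)) (T : ℕ × ℕ → ℕ) : Prop :=
  (∀ p, p ∉ cells f \ H → T p = 0) ∧ (∀ p ∈ cells f \ H, 1 ≤ T p)

/-- A semistandard punctured tableau: entries weakly increase along rows and strictly
increase down columns (comparisons among filled cells). -/
def PSSYT (f : ℕ → ℕ) (H : Set (ℕ × ℕ)) (T : ℕ × ℕ → ℕ) : Prop :=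
  PTab f H T ∧
  (∀ i j l, (i, j) ∈ cells f \ H → (i, l) ∈ cells f \ H → j < l → T (i, j) ≤ T (i, l)) ∧
  (∀ i k j, (i, j) ∈ cells f \ H → (k, j) ∈ cells f \ H → i < k → T (i, j) < T (k, j))

/-- The row-word: entries read left-to-right along rows, bottom row to top, skipping
holes; `N` is any bound on the number of rows. -/
noncomputable def rowWordP (f : ℕ → ℕ) (H : Set (ℕ × ℕ)) (T : ℕ × ℕ → ℕ) (N : ℕ) :
    List ℕ :=
  ((List.range N).reverse.map (fun i =>
    ((((List.range (f (i + 1))).map (· + 1)).filter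
        (fun j => decide ((i + 1, j) ∉ H))).map (fun j => T (i + 1, j))))).flatten

/-- The column-word: entries of each column read bottom-to-top, columns left to right,
skipping holes; `N` bounds the number of rows, `M` the number of columns. -/
noncomputable def colWordP (f : ℕ → ℕ) (H : Set (ℕ × ℕ)) (T : ℕ × ℕ → ℕ) (N M : ℕ) :
    List ℕ :=
  ((List.range M).map (fun j =>
    ((((List.range N).reverse.map (· + 1)).filter
        (fun i => decide ((i, j + 1) ∈ cells f \ H))).map (fun i => T (i, j + 1))))).flatten

/-- The data of the Schensted row-insertion of the letter `x` into the semistandard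
tableau `T` of shape `f`: `r` is the number of rows visited, `c i` is the row-insertion
route (the column where row `i` is modified), and `xs i` are the row-inserting letters.
`c i` is the least `j ≥ 1` with `T (i,j) > xs i`, where entries outside the diagram are
treated as `∞` (so `c i = f i + 1` when no entry of row `i` exceeds `xs i`); for
`i < r` the entry `T (i, c i)` is bumped into the next row, and the process stops at row
`r`, where the letter is appended at the end of the row. -/
def InsData (f : ℕ → ℕ) (T : ℕ × ℕ → ℕ) (x r : ℕ) (c xs : ℕ → ℕ) : Prop :=
  1 ≤ r ∧ xs 1 = x ∧
  (∀ i, 1 ≤ i → i ≤ r →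
    1 ≤ c i ∧ c i ≤ f i + 1 ∧
    (∀ j, 1 ≤ j → j < c i → T (i, j) ≤ xs i) ∧
    (c i ≤ f i → xs i < T (i, c i))) ∧
  (∀ i, 1 ≤ i → i < r → c i ≤ f i ∧ xs (i + 1) = T (i, c i)) ∧
  c r = f r + 1

/-- The tableau `T ← x` resulting from the row-insertion with route `c` and inserting
letters `xs`, terminating at row `r`. -/
def insResult (T : ℕ × ℕ → ℕ) (r : ℕ) (c xs : ℕ → ℕ) : ℕ × ℕ → ℕ :=
  fun p => if 1 ≤ p.1 ∧ p.1 ≤ r ∧ p.2 = c p.1 then xs p.1 else T p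

/-- `add(λ,r)`: replace `λ_r` by `λ_r + 1`. -/
def addRow (f : ℕ → ℕ) (r : ℕ) : ℕ → ℕ := Function.update f r (f r + 1)

/-- A symplectic (King) tableau: a semistandard tableau with `T(i,1) ≥ 2i - 1`. -/
def Symp (f : ℕ → ℕ) (T : ℕ × ℕ → ℕ) : Prop :=
  PSSYT f ∅ T ∧ ∀ i, 1 ≤ i → 1 ≤ f i → 2 * i - 1 ≤ T (i, 1)

/-- Entries bounded above by `m`. -/
def EntriesLE (f : ℕ → ℕ) (T : ℕ × ℕ → ℕ) (m : ℕ) : Prop :=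
  ∀ p ∈ cells f, T p ≤ m

theorem stmt12 (n : ℕ) (f : ℕ → ℕ) (hf : IsPartitionF f)
    (hfn : ∀ i, n < i → f i = 0)
    (T : ℕ × ℕ → ℕ) (hT : Symp f T) (hTe : EntriesLE f T (2 * n))
    (x : ℕ) (hx : 1 ≤ x ∧ x ≤ 2 * n)
    (r : ℕ) (c xs : ℕ → ℕ) (h : InsData f T x r c xs)
    (hall : ∀ i, 1 ≤ i → i ≤ r → 2 * i - 1 ≤ xs i) :
    Symp (addRow f r) (insResult T r c xs) := by
  classical
  obtain ⟨hfant, -⟩ := hf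
  obtain ⟨⟨⟨hT0, hTpos⟩, hrow, hcol⟩, hfirst⟩ := hT
  obtain ⟨hr1, hxs1, hmid, hbump, hcr⟩ := h
  simp only [Set.diff_empty] at hT0 hTpos hrow hcol
  have memf : ∀ i j : ℕ, (i, j) ∈ cells f ↔ 1 ≤ i ∧ 1 ≤ j ∧ j ≤ f i := fun i j => Iff.rfl
  have hg : ∀ i, addRow f r i = if i = r then f r + 1 else f i := by
    intro i; simp [addRow, Function.update_apply]
  have memg : ∀ i j : ℕ, (i, j) ∈ cells (addRow f r) ↔
      1 ≤ i ∧ 1 ≤ j ∧ j ≤ addRow f r i := fun i j => Iff.rfl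
  have hT' : ∀ i j : ℕ, insResult T r c xs (i, j) =
      if 1 ≤ i ∧ i ≤ r ∧ j = c i then xs i else T (i, j) := fun i j => rfl
  have hci1 : ∀ i, 1 ≤ i → i ≤ r → 1 ≤ c i := fun i h1 h2 => (hmid i h1 h2).1
  have hcir : ∀ i, 1 ≤ i → i < r → c i ≤ f i := fun i h1 h2 => (hbump i h1 h2).1
  have hfge : ∀ i, f i ≤ addRow f r i := by
    intro i; rw [hg]
    by_cases hir : i = r
    · rw [if_pos hir, hir]; omega
    · rw [if_neg hir]
  have hsup : ∀ i j : ℕ, (i, j) ∈ cells f → (i, j) ∈ cells (addRow f r) := by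
    intro i j hm
    rw [memf] at hm; rw [memg]
    exact ⟨hm.1, hm.2.1, le_trans hm.2.2 (hfge i)⟩
  have hsub : ∀ i j : ℕ, (i, j) ∈ cells (addRow f r) →
      (i = r ∧ j = f r + 1) ∨ (i, j) ∈ cells f := by
    intro i j hm
    rw [memg] at hm; rw [hg] at hm
    by_cases hir : i = r
    · rw [if_pos hir] at hm
      rcases Nat.lt_or_ge j (f r + 1) with h' | h'
      · exact Or.inr ((memf i j).2 ⟨hm.1, hm.2.1, by rw [hir]; omega⟩)
      · exact Or.inl ⟨hir, by omega⟩
    · rw [if_neg hir] at hm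
      exact Or.inr ((memf i j).2 hm)
  have hxsmono : ∀ i, 1 ≤ i → i < r → xs i < xs (i + 1) := by
    intro i h1 h2
    obtain ⟨hci, hxsi⟩ := hbump i h1 h2
    rw [hxsi]
    exact (hmid i h1 (le_of_lt h2)).2.2.2 hci
  have hxspos : ∀ i, 1 ≤ i → i ≤ r → 1 ≤ xs i := by
    intro i
    induction i with
    | zero => intro h1 _; omega
    | succ m ih =>
      intro _ h2
      rcases Nat.eq_zero_or_pos m with hm | hm
      · subst hm; rw [hxs1]; exact hx.1
      · have h3 : xs m < xs (m + 1) := hxsmono m hm (by omega)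
        have h4 := ih hm (by omega); omega
  have cadj : ∀ i, 1 ≤ i → i < r → c (i + 1) ≤ c i := by
    intro i h1 h2
    by_contra hlt
    push_neg at hlt
    have hci : c i ≤ f i := hcir i h1 h2
    have hmid' := hmid (i + 1) (by omega) (by omega)
    have hcif1 : c i ≤ f (i + 1) := by have := hmid'.2.1; omega
    have hmem1 : (i, c i) ∈ cells f := (memf _ _).2 ⟨h1, hci1 i h1 (by omega), hci⟩
    have hmem2 : (i + 1, c i) ∈ cells f := (memf _ _).2 ⟨by omega, hci1 i h1 (by omega), hcif1⟩
    have hlt2 : T (i, c i) < T (i + 1, c i) := hcol i (i + 1) (c i) hmem1 hmem2 (by omega)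
    have hle : T (i + 1, c i) ≤ xs (i + 1) := hmid'.2.2.1 (c i) (hci1 i h1 (by omega)) hlt
    rw [(hbump i h1 h2).2] at hle
    omega
  have cmono : ∀ m k, 1 ≤ m → m ≤ k → k ≤ r → c k ≤ c m := by
    intro m k h1 h2 h3
    induction k with
    | zero => omega
    | succ p ih =>
      rcases Nat.lt_or_ge m (p + 1) with hm | hm
      · have := ih (by omega) (by omega)
        have := cadj p (by omega) (by omega)
        omega
      · have : m = p + 1 := by omega
        subst this; exact le_refl _
  have gmono : ∀ m k, 1 ≤ m → m ≤ k → addRow f r k ≤ addRow f r m := by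
    intro m k h1 h2
    rw [hg, hg]
    by_cases hk : k = r
    · rw [if_pos hk]
      by_cases hm : m = r
      · rw [if_pos hm]
      · rw [if_neg hm]
        have hmr : m < r := by omega
        have h3 : c r ≤ c m := cmono m r h1 (by omega) (le_refl _)
        have h4 : c m ≤ f m := hcir m h1 hmr
        omega
    · rw [if_neg hk]
      by_cases hm : m = r
      · subst hm
        rw [if_pos rfl]
        have : f k ≤ f m := hfant m k h1 h2
        omega
      · rw [if_neg hm]
        exact hfant m k h1 h2
  have hPin : ∀ i, 1 ≤ i → i ≤ r → (i, c i) ∈ cells (addRow f r) := by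
    intro i h1 h2
    rw [memg, hg]
    refine ⟨h1, hci1 i h1 h2, ?_⟩
    by_cases hir : i = r
    · rw [if_pos hir, hir, hcr]
    · rw [if_neg hir]
      exact hcir i h1 (by omega)
  -- adjacent column strictness
  have hadj : ∀ i j, 1 ≤ i → (i, j) ∈ cells (addRow f r) → (i + 1, j) ∈ cells (addRow f r) →
      insResult T r c xs (i, j) < insResult T r c xs (i + 1, j) := by
    intro i j h1 hm1 hm2
    rw [hT', hT']
    by_cases hP2 : 1 ≤ i + 1 ∧ i + 1 ≤ r ∧ j = c (i + 1)
    · rw [if_pos hP2]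
      have hir : i < r := by omega
      by_cases hP1 : 1 ≤ i ∧ i ≤ r ∧ j = c i
      · rw [if_pos hP1]
        exact hxsmono i h1 hir
      · rw [if_neg hP1]
        -- j ≠ c i, j = c (i+1) ≤ c i so j < c i
        have hjne : j ≠ c i := by
          intro hj; exact hP1 ⟨h1, by omega, hj⟩
        have hjle : j ≤ c i := by
          rw [hP2.2.2]; exact cadj i h1 hir
        have hjlt : j < c i := by omega
        have hj1 : 1 ≤ j := ((memg i j).1 hm1).2.1
        have hle : T (i, j) ≤ xs i := (hmid i h1 (by omega)).2.2.1 j hj1 hjlt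
        have := hxsmono i h1 hir
        omega
    · rw [if_neg hP2]
      -- (i+1, j) is an unmodified cell, hence in cells f
      have hm2f : (i + 1, j) ∈ cells f := by
        rcases hsub (i + 1) j hm2 with ⟨hir, hjf⟩ | hmf
        · exfalso
          apply hP2
          refine ⟨by omega, by omega, ?_⟩
          rw [hir, hcr, hjf]
        · exact hmf
      have hjf1 : j ≤ f (i + 1) := ((memf _ _).1 hm2f).2.2
      have hjfi : j ≤ f i := le_trans hjf1 (hfant i (i + 1) h1 (by omega))
      have hj1 : 1 ≤ j := ((memf _ _).1 hm2f).2.1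
      have hm1f : (i, j) ∈ cells f := (memf _ _).2 ⟨h1, hj1, hjfi⟩
      by_cases hP1 : 1 ≤ i ∧ i ≤ r ∧ j = c i
      · rw [if_pos hP1]
        -- xs i < T (i, c i) = T (i, j) < T (i+1, j)
        have hci : c i ≤ f i := hP1.2.2 ▸ hjfi
        have h2 : xs i < T (i, c i) := (hmid i h1 hP1.2.1).2.2.2 hci
        have h3 : T (i, j) < T (i + 1, j) := hcol i (i + 1) j hm1f hm2f (by omega)
        rw [← hP1.2.2] at h2
        omega
      · rw [if_neg hP1]
        exact hcol i (i + 1) j hm1f hm2f (by omega)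
  refine ⟨⟨⟨?_, ?_⟩, ?_, ?_⟩, ?_⟩
  · -- zero outside
    rintro ⟨i, j⟩ hp
    rw [Set.diff_empty] at hp
    rw [hT']
    by_cases hP : 1 ≤ i ∧ i ≤ r ∧ j = c i
    · exact absurd (hP.2.2 ▸ hPin i hP.1 hP.2.1) hp
    · rw [if_neg hP]
      exact hT0 (i, j) (fun hm => hp (hsup i j hm))
  · -- positive inside
    rintro ⟨i, j⟩ hp
    rw [Set.diff_empty] at hp
    rw [hT']
    by_cases hP : 1 ≤ i ∧ i ≤ r ∧ j = c i
    · rw [if_pos hP]; exact hxspos i hP.1 hP.2.1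
    · rw [if_neg hP]
      rcases hsub i j hp with ⟨hir, hjf⟩ | hmf
      · exfalso; exact hP ⟨by rw [hir]; omega, by omega, by rw [hjf, hir, hcr]⟩
      · exact hTpos (i, j) hmf
  · -- rows
    intro i j l hm1 hm2 hjl
    rw [Set.diff_empty] at hm1 hm2
    rw [hT', hT']
    have h1 : 1 ≤ i := ((memg i j).1 hm1).1
    have hj1 : 1 ≤ j := ((memg i j).1 hm1).2.1
    by_cases hir : i ≤ r
    · by_cases hj : j = c i
      · rw [if_pos ⟨h1, hir, hj⟩]
        -- l > c i, so l ≠ c i; i ≠ r since otherwise l > c r = g r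
        have hine : i ≠ r := by
          intro hirr
          have : l ≤ addRow f r i := ((memg i l).1 hm2).2.2
          rw [hg, if_pos hirr] at this
          rw [hirr, hcr] at hj
          omega
        have hlf : l ≤ f i := by
          have : l ≤ addRow f r i := ((memg i l).1 hm2).2.2
          rw [hg, if_neg hine] at this; exact this
        have hlne : l ≠ c i := by omega
        rw [if_neg (by intro hh; exact hlne hh.2.2)]
        have hci : c i ≤ f i := by omega
        have h2 : xs i < T (i, c i) := (hmid i h1 hir).2.2.2 hci
        rcases Nat.lt_or_ge (c i) l with h' | h'
        · have h3 : T (i, c i) ≤ T (i, l) :=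
            hrow i (c i) l ((memf _ _).2 ⟨h1, hci1 i h1 hir, hci⟩)
              ((memf _ _).2 ⟨h1, by omega, hlf⟩) h'
          omega
        · have : l = c i := by omega
          omega
      · rw [if_neg (by intro hh; exact hj hh.2.2)]
        by_cases hl : l = c i
        · rw [if_pos ⟨h1, hir, hl⟩]
          exact (hmid i h1 hir).2.2.1 j hj1 (hl ▸ hjl)
        · rw [if_neg (by intro hh; exact hl hh.2.2)]
          -- both unmodified; l ≤ f i
          have hlf : l ≤ f i := by
            rcases hsub i l hm2 with ⟨hirr, hlv⟩ | hmf
            · exfalso; apply hl; rw [hlv, hirr, hcr]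
            · exact ((memf _ _).1 hmf).2.2
          have hjf : j ≤ f i := by omega
          exact hrow i j l ((memf _ _).2 ⟨h1, hj1, hjf⟩) ((memf _ _).2 ⟨h1, by omega, hlf⟩) hjl
    · rw [if_neg (by intro hh; exact hir hh.2.1), if_neg (by intro hh; exact hir hh.2.1)]
      have hine : i ≠ r := by omega
      have hjf : j ≤ f i := by
        have := ((memg i j).1 hm1).2.2; rw [hg, if_neg hine] at this; exact this
      have hlf : l ≤ f i := by
        have := ((memg i l).1 hm2).2.2; rw [hg, if_neg hine] at this; exact this
      exact hrow i j l ((memf _ _).2 ⟨h1, hj1, hjf⟩) ((memf _ _).2 ⟨h1, by omega, hlf⟩) hjl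
  · -- columns
    intro i k j hm1 hm2 hik
    rw [Set.diff_empty] at hm1 hm2
    have h1 : 1 ≤ i := ((memg i j).1 hm1).1
    have key : ∀ k', i + 1 ≤ k' → (k', j) ∈ cells (addRow f r) →
        insResult T r c xs (i, j) < insResult T r c xs (k', j) := by
      intro k'
      induction k' with
      | zero => omega
      | succ p ih =>
        intro hp hmp
        rcases Nat.lt_or_ge (i + 1) (p + 1) with h' | h'
        · have hmid' : (p, j) ∈ cells (addRow f r) := by
            rw [memg]
            refine ⟨by omega, ((memg _ _).1 hmp).2.1, ?_⟩
            exact le_trans ((memg _ _).1 hmp).2.2 (gmono p (p + 1) (by omega) (by omega))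
          exact lt_trans (ih (by omega) hmid') (hadj p j (by omega) hmid' hmp)
        · have hpi : p = i := by omega
          subst hpi
          exact hadj p j h1 hm1 hmp
    exact key k (by omega) hm2
  · -- first column bound
    intro i h1 hgi
    rw [hT']
    by_cases hP : 1 ≤ i ∧ i ≤ r ∧ 1 = c i
    · rw [if_pos hP]; exact hall i h1 hP.2.1
    · rw [if_neg hP]
      by_cases hir : i = r
      · subst hir
        rcases Nat.eq_zero_or_pos (f i) with hfr | hfr
        · exfalso; apply hP
          refine ⟨h1, le_refl _, ?_⟩
          rw [hcr, hfr]
        · exact hfirst i h1 hfr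
      · have : 1 ≤ f i := by rw [hg, if_neg hir] at hgi; exact hgi
        exact hfirst i h1 this
end

section
/- Let T be a symplectic tableau with entries in [2n], x ∈ [2n], and (x_1,…,x_r) the row-inserting letters for (T,x). If x_i < 2i−1 for some i ∈ [r], then T ← x is not symplectic; moreover, if s is the minimal such i, then s ≥ 2, x_{s−1} = 2s−3, x_s = 2s−2, and x_i = T(i−1,1) for all i ∈ [s+1, r]. -/
open scoped Classical

theorem stmt13 (n : ℕ) (f : ℕ → ℕ) (hf : IsPartitionF f)
    (hfn : ∀ i, n < i → f i = 0)
    (T : ℕ × ℕ → ℕ) (hT : Symp f T) (hTe : EntriesLE f T (2 * n))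
    (x : ℕ) (hx : 1 ≤ x ∧ x ≤ 2 * n)
    (r : ℕ) (c xs : ℕ → ℕ) (h : InsData f T x r c xs)
    (s : ℕ) (hs1 : 1 ≤ s) (hsr : s ≤ r) (hsx : xs s < 2 * s - 1)
    (hmin : ∀ i, 1 ≤ i → i < s → 2 * i - 1 ≤ xs i) :
    ¬ Symp (addRow f r) (insResult T r c xs) ∧
    2 ≤ s ∧
    xs (s - 1) = 2 * s - 3 ∧
    xs s = 2 * s - 2 ∧
    (∀ i, s + 1 ≤ i → i ≤ r → xs i = T (i - 1, 1)) := by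
  obtain ⟨hr1, hx1, hmain, hbump, hcr⟩ := h
  obtain ⟨⟨⟨hT0, hTpos⟩, hrow, hcol⟩, hsymp⟩ := hT
  have mem : ∀ i j : ℕ, 1 ≤ i → 1 ≤ j → j ≤ f i →
      (i, j) ∈ cells f \ (∅ : Set (ℕ × ℕ)) :=
    fun i j h1 h2 h3 => ⟨⟨h1, h2, h3⟩, Set.notMem_empty _⟩
  have hs2 : 2 ≤ s := by
    rcases Nat.lt_or_ge s 2 with h' | h'
    · exfalso
      have hse : s = 1 := by omega
      subst hse
      omega
    · exact h'
  obtain ⟨hc1, hxs⟩ := hbump (s - 1) (by omega) (by omega)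
  have hxs' : xs s = T (s - 1, c (s - 1)) := by
    have h1 : s - 1 + 1 = s := by omega
    rw [← h1]; exact hxs
  obtain ⟨hcge, hcle, hjle, hstrict⟩ := hmain (s - 1) (by omega) (by omega)
  have hstrict' : xs (s - 1) < xs s := by
    rw [hxs']; exact hstrict hc1
  have hT1le : T (s - 1, 1) ≤ T (s - 1, c (s - 1)) := by
    rcases Nat.lt_or_ge 1 (c (s - 1)) with h' | h'
    · exact hrow (s - 1) 1 (c (s - 1)) (mem _ _ (by omega) le_rfl (by omega))
        (mem _ _ (by omega) hcge hc1) h'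
    · have heq : c (s - 1) = 1 := by omega
      rw [heq]
  have hsymp1 : 2 * (s - 1) - 1 ≤ T (s - 1, 1) := hsymp (s - 1) (by omega) (by omega)
  have hminv : 2 * (s - 1) - 1 ≤ xs (s - 1) := hmin (s - 1) (by omega) (by omega)
  have hxss : xs s = 2 * s - 2 := by omega
  have hxsm : xs (s - 1) = 2 * s - 3 := by omega
  have hcs : c s = 1 := by
    obtain ⟨hcsge, hcsle, hjles, _⟩ := hmain s hs1 hsr
    by_contra hne
    have h2 : 2 ≤ c s := by omega
    have hT1 : T (s, 1) ≤ xs s := hjles 1 le_rfl (by omega)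
    have hfs : 1 ≤ f s := by
      rcases Nat.lt_or_ge s r with hlt | hge
      · exact le_trans hcsge (hbump s hs1 hlt).1
      · have heq : s = r := by omega
        rw [heq] at h2
        rw [heq]
        omega
    have := hsymp s (by omega) hfs
    omega
  have key : ∀ i, s ≤ i → i < r → c i = 1 ∧ xs (i + 1) = T (i, 1) := by
    intro i hi
    induction i, hi using Nat.le_induction with
    | base =>
      intro hsr'
      refine ⟨hcs, ?_⟩
      have hb := (hbump s hs1 hsr').2
      rw [hb, hcs]
    | succ m hm ih =>
      intro hmr
      obtain ⟨hcm, hxm⟩ := ih (by omega)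
      obtain ⟨hcmf, hxm2⟩ := hbump (m + 1) (by omega) hmr
      have hfm1 : 1 ≤ f (m + 1) := le_trans (hmain (m + 1) (by omega) (by omega)).1 hcmf
      have hfm : 1 ≤ f m := le_trans hfm1 (hf.1 m (m + 1) (by omega) (by omega))
      have hcolm : T (m, 1) < T (m + 1, 1) :=
        hcol m (m + 1) 1 (mem _ _ (by omega) le_rfl hfm)
          (mem _ _ (by omega) le_rfl hfm1) (by omega)
      have hcm1 : c (m + 1) = 1 := by
        obtain ⟨hg, _, hj, _⟩ := hmain (m + 1) (by omega) (by omega)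
        by_contra hne
        have := hj 1 le_rfl (by omega)
        omega
      refine ⟨hcm1, ?_⟩
      rw [hxm2, hcm1]
  refine ⟨?_, hs2, hxsm, hxss, ?_⟩
  · rintro ⟨-, hsymp'⟩
    have hfs' : 1 ≤ addRow f r s := by
      rcases Nat.lt_or_ge s r with hlt | hge
      · rw [addRow, Function.update_of_ne (by omega)]
        exact le_trans (hmain s hs1 hsr).1 (hbump s hs1 hlt).1
      · have heq : s = r := by omega
        rw [heq, addRow, Function.update_self]
        omega
    have hres := hsymp' s (by omega) hfs'
    have hval : insResult T r c xs (s, 1) = xs s := by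
      simp [insResult, hcs, hs1, hsr]
    rw [hval] at hres
    omega
  · intro i hi1 hi2
    obtain ⟨-, h2⟩ := key (i - 1) (by omega) (by omega)
    have heq : i - 1 + 1 = i := by omega
    rw [heq] at h2
    exact h2
end

section
/- (Berele row bumping lemma, increasing case) Let T be a symplectic tableau with entries in [2n] and x ≤ x' in [2n]. Let r be the terminal row of the Berele insertion of x into T, and r' the terminal row of the Berele insertion of x' into T ←ᴮ x. Then r ≥ r' in the ordered set 1 < 2 < ⋯ < 2̄ < 1̄. -/
open scoped Classical

/-- Move the hole from `p` to the filled cell `q`: the entry at `q` moves into `p`, and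
`q` becomes the new hole (set to `0`). -/
noncomputable def moveHole (H : Set (ℕ × ℕ)) (T : ℕ × ℕ → ℕ) (p q : ℕ × ℕ) :
    Set (ℕ × ℕ) × (ℕ × ℕ → ℕ) :=
  ((H \ {p}) ∪ {q}, Function.update (Function.update T p (T q)) q 0)

/-- One step of the Schützenberger sliding: the state is `(H, T, hole)`.  The hole moves
right if the entry to the right is strictly smaller than the entry below (or there is no
entry below), and moves down otherwise (when there is an entry below). -/
def SlideStep (f : ℕ → ℕ) :
    (Set (ℕ × ℕ) × (ℕ × ℕ → ℕ) × (ℕ × ℕ)) → (Set (ℕ × ℕ) × (ℕ × ℕ → ℕ) × (ℕ × ℕ)) → Prop :=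
  fun s t =>
    ((s.2.2.1, s.2.2.2 + 1) ∈ cells f \ s.1 ∧
      ((s.2.2.1 + 1, s.2.2.2) ∈ cells f \ s.1 →
        s.2.1 (s.2.2.1, s.2.2.2 + 1) < s.2.1 (s.2.2.1 + 1, s.2.2.2)) ∧
      t = ((moveHole s.1 s.2.1 s.2.2 (s.2.2.1, s.2.2.2 + 1)).1,
           (moveHole s.1 s.2.1 s.2.2 (s.2.2.1, s.2.2.2 + 1)).2, (s.2.2.1, s.2.2.2 + 1)))
  ∨ ((s.2.2.1 + 1, s.2.2.2) ∈ cells f \ s.1 ∧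
      ((s.2.2.1, s.2.2.2 + 1) ∈ cells f \ s.1 →
        s.2.1 (s.2.2.1 + 1, s.2.2.2) ≤ s.2.1 (s.2.2.1, s.2.2.2 + 1)) ∧
      t = ((moveHole s.1 s.2.1 s.2.2 (s.2.2.1 + 1, s.2.2.2)).1,
           (moveHole s.1 s.2.1 s.2.2 (s.2.2.1 + 1, s.2.2.2)).2, (s.2.2.1 + 1, s.2.2.2)))

/-- One step of the reverse sliding: the hole moves left if the entry to the left is
strictly greater than the entry above (or there is no entry above), and moves up
otherwise (when there is an entry above). -/
def RevSlideStep (f : ℕ → ℕ) :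
    (Set (ℕ × ℕ) × (ℕ × ℕ → ℕ) × (ℕ × ℕ)) → (Set (ℕ × ℕ) × (ℕ × ℕ → ℕ) × (ℕ × ℕ)) → Prop :=
  fun s t =>
    ((s.2.2.1, s.2.2.2 - 1) ∈ cells f \ s.1 ∧
      ((s.2.2.1 - 1, s.2.2.2) ∈ cells f \ s.1 →
        s.2.1 (s.2.2.1 - 1, s.2.2.2) < s.2.1 (s.2.2.1, s.2.2.2 - 1)) ∧
      t = ((moveHole s.1 s.2.1 s.2.2 (s.2.2.1, s.2.2.2 - 1)).1,
           (moveHole s.1 s.2.1 s.2.2 (s.2.2.1, s.2.2.2 - 1)).2, (s.2.2.1, s.2.2.2 - 1)))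
  ∨ ((s.2.2.1 - 1, s.2.2.2) ∈ cells f \ s.1 ∧
      ((s.2.2.1, s.2.2.2 - 1) ∈ cells f \ s.1 →
        s.2.1 (s.2.2.1, s.2.2.2 - 1) ≤ s.2.1 (s.2.2.1 - 1, s.2.2.2)) ∧
      t = ((moveHole s.1 s.2.1 s.2.2 (s.2.2.1 - 1, s.2.2.2)).1,
           (moveHole s.1 s.2.1 s.2.2 (s.2.2.1 - 1, s.2.2.2)).2, (s.2.2.1 - 1, s.2.2.2)))

/-- `p` is the latest slidable hole with respect to the lexicographic order. -/
def LatestSlidable (f : ℕ → ℕ) (H : Set (ℕ × ℕ)) (p : ℕ × ℕ) : Prop :=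
  Slidable f H p ∧ ∀ q, Slidable f H q → q.1 < p.1 ∨ (q.1 = p.1 ∧ q.2 ≤ p.2)

/-- `p` is the first reversely slidable hole with respect to the lexicographic order. -/
def FirstRevSlidable (f : ℕ → ℕ) (H : Set (ℕ × ℕ)) (p : ℕ × ℕ) : Prop :=
  RevSlidable f H p ∧ ∀ q, RevSlidable f H q → p.1 < q.1 ∨ (p.1 = q.1 ∧ p.2 ≤ q.2)

/-- One step of the rectification: perform the full sliding `Sl(T;r,c)` at the latest
slidable hole `(r,c)`. -/
def RectStep (f : ℕ → ℕ) :
    (Set (ℕ × ℕ) × (ℕ × ℕ → ℕ)) → (Set (ℕ × ℕ) × (ℕ × ℕ → ℕ)) → Prop :=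
  fun s t => ∃ p p', LatestSlidable f s.1 p ∧
    Relation.ReflTransGen (SlideStep f) (s.1, s.2, p) (t.1, t.2, p') ∧
    ¬ Slidable f t.1 p'

/-- One step of the reverse rectification: perform the full reverse sliding at the first
reversely slidable hole. -/
def RevRectStep (f : ℕ → ℕ) :
    (Set (ℕ × ℕ) × (ℕ × ℕ → ℕ)) → (Set (ℕ × ℕ) × (ℕ × ℕ → ℕ)) → Prop :=
  fun s t => ∃ p p', FirstRevSlidable f s.1 p ∧
    Relation.ReflTransGen (RevSlideStep f) (s.1, s.2, p) (t.1, t.2, p') ∧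
    ¬ RevSlidable f t.1 p'

/-- `rm(λ,r)`: replace `λ_r` by `λ_r - 1`. -/
def rmRow (f : ℕ → ℕ) (r : ℕ) : ℕ → ℕ := Function.update f r (f r - 1)

/-- The punctured tableau of shape `(ν, {(s-1,1)})` appearing in the Berele insertion
when the symplectic condition first fails at row `s`: the letters `xs i` have been
inserted in columns `c i` of rows `i ≤ s - 1`, and the cell `(s-1,1)` is a hole. -/
def bereleMid (T : ℕ × ℕ → ℕ) (s : ℕ) (c xs : ℕ → ℕ) : ℕ × ℕ → ℕ :=
  fun p => if p = (s - 1, 1) then 0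
    else if 1 ≤ p.1 ∧ p.1 + 1 ≤ s ∧ p.2 = c p.1 then xs p.1 else T p

/-- The Berele row-insertion `T ←ᴮ x` of `x` into the symplectic tableau `T` of shape
`f`, producing the symplectic tableau `S` of shape `g`, together with its terminal row
`ρ : ℕ ⊕ ℕ` (`Sum.inl r` is the unbarred row `r`, `Sum.inr k` is the barred row `k̄`).
Either the Schensted insertion never violates the symplectic bound `xs i ≥ 2i - 1`, in
which case `T ←ᴮ x = T ← x` adds a box in row `r`; or the bound first fails at row `s`,
in which case the insertion is stopped, the cell `(s-1,1)` becomes a hole, and the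
resulting punctured tableau is rectified by the jeu de taquin sliding, removing a box
from the terminal row `k` of the slide. -/
def BereleT (f : ℕ → ℕ) (T : ℕ × ℕ → ℕ) (x : ℕ) (g : ℕ → ℕ) (S : ℕ × ℕ → ℕ)
    (ρ : ℕ ⊕ ℕ) : Prop :=
  ∃ r c xs, InsData f T x r c xs ∧
    (((∀ i, 1 ≤ i → i ≤ r → 2 * i - 1 ≤ xs i) ∧
        g = addRow f r ∧ S = insResult T r c xs ∧ ρ = Sum.inl r) ∨
      (∃ s, 1 ≤ s ∧ s ≤ r ∧ xs s < 2 * s - 1 ∧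
        (∀ i, 1 ≤ i → i < s → 2 * i - 1 ≤ xs i) ∧
        ∃ H' p', Relation.ReflTransGen (SlideStep f)
            ({((s : ℕ) - 1, 1)}, bereleMid T s c xs, (s - 1, 1)) (H', S, p') ∧
          ¬ Slidable f H' p' ∧ g = rmRow f p'.1 ∧ ρ = Sum.inr p'.1))

/-- The Berele row-insertion relation `T ←ᴮ x = S`, with `g = sh(S)`. -/
def Berele (f : ℕ → ℕ) (T : ℕ × ℕ → ℕ) (x : ℕ) (g : ℕ → ℕ) (S : ℕ × ℕ → ℕ) : Prop :=
  ∃ ρ, BereleT f T x g S ρ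

/-- `h` is obtained from `g` by adding one box. -/
def OneBox (g h : ℕ → ℕ) : Prop := ∃ r, 1 ≤ r ∧ h = addRow g r ∧ g r < h r

/-- The total order on `R = ℤ_{>0} ⊔ {r̄}`: `1 < 2 < ⋯ < 2̄ < 1̄`.  Unbarred letters
`Sum.inl a` are ordered naturally, every unbarred letter is below every barred letter
`Sum.inr b`, and barred letters are ordered in reverse. -/
def Rle (ρ σ : ℕ ⊕ ℕ) : Prop :=
  match ρ, σ with
  | Sum.inl a, Sum.inl b => a ≤ b
  | Sum.inl _, Sum.inr _ => True
  | Sum.inr _, Sum.inl _ => False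
  | Sum.inr a, Sum.inr b => b ≤ a

/-- Strict version of `Rle`. -/
def Rlt (ρ σ : ℕ ⊕ ℕ) : Prop := Rle ρ σ ∧ ρ ≠ σ

namespace S15

def Behind (p q : ℕ × ℕ) : Prop := q.1 < p.1 ∨ (q.1 = p.1 ∧ q.2 < p.2)
def Ahead (p q : ℕ × ℕ) : Prop := p.1 < q.1 ∨ (p.1 = q.1 ∧ p.2 < q.2)

lemma singleton_move (p q : ℕ × ℕ) : (({p} : Set (ℕ×ℕ)) \ {p}) ∪ {q} = {q} := by
  simp

lemma run_main (f : ℕ → ℕ) {a b : Set (ℕ×ℕ) × ((ℕ×ℕ) → ℕ) × (ℕ×ℕ)}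
    (h : Relation.ReflTransGen (SlideStep f) a b) :
    ∀ (V : (ℕ×ℕ) → ℕ) (pi pm : ℕ), a = ({(pi, pm)}, V, (pi, pm)) →
    b.1 = {b.2.2} ∧ pi ≤ b.2.2.1 ∧ pm ≤ b.2.2.2 ∧
    (∀ q, Behind (pi, pm) q → b.2.1 q = V q) ∧
    ∃ B : ℕ → ℕ, ∀ j, pi ≤ j → j < b.2.2.1 →
      ((j+1, B j) ∈ cells f ∧ b.2.1 (j, B j) = V (j+1, B j) ∧
       (∀ z, z < B j → b.2.1 (j+1, z) = V (j+1, z)) ∧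
       (j + 1 < b.2.2.1 → B j ≤ B (j+1)) ∧ pm ≤ B j) := by
  induction h using Relation.ReflTransGen.head_induction_on with
  | refl =>
      intro V pi pm hp
      subst hp
      exact ⟨rfl, le_rfl, le_rfl, fun q _ => rfl, fun _ => 0,
        fun j hj1 hj2 => absurd (lt_of_le_of_lt hj1 hj2) (lt_irrefl _)⟩
  | head step rest ih =>
      intro V pi pm hp
      subst hp
      rcases step with ⟨hin, himp, ht⟩ | ⟨hin, himp, ht⟩ <;>
        dsimp only at hin himp ht
      · -- right move, new hole (pi, pm+1)
        obtain ⟨ihH, ihr, ihc, ihbehind, Bf, ihrows⟩ :=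
          ih (Function.update (Function.update V (pi,pm) (V (pi, pm+1))) (pi, pm+1) 0)
            pi (pm+1) (by rw [ht]; unfold moveHole; rw [singleton_move])
        refine ⟨ihH, ihr, by omega, ?_, Bf, ?_⟩
        · intro z hz
          have e1 : z ≠ (pi, pm+1) := by
            rintro rfl; simp only [Behind] at hz; omega
          have e2 : z ≠ (pi, pm) := by
            rintro rfl; simp only [Behind] at hz; omega
          have hz1 : Behind (pi, pm+1) z := by
            simp only [Behind] at hz ⊢; omega
          rw [ihbehind z hz1, Function.update_of_ne e1, Function.update_of_ne e2]
        · intro j hj1 hj2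
          obtain ⟨k1, k2, k3, k4, k5⟩ := ihrows j hj1 hj2
          have hrne : ∀ z : ℕ, ((j+1, z) : ℕ × ℕ) ≠ (pi, pm+1) ∧
              ((j+1, z) : ℕ × ℕ) ≠ (pi, pm) := by
            intro z
            constructor <;> (rintro h; rw [Prod.mk.injEq] at h; omega)
          refine ⟨k1, ?_, ?_, k4, by omega⟩
          · rw [k2, Function.update_of_ne (hrne _).1, Function.update_of_ne (hrne _).2]
          · intro z hzlt
            rw [k3 z hzlt, Function.update_of_ne (hrne _).1,
              Function.update_of_ne (hrne _).2]
      · -- down move, new hole (pi+1, pm)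
        obtain ⟨ihH, ihr, ihc, ihbehind, Bf, ihrows⟩ :=
          ih (Function.update (Function.update V (pi,pm) (V (pi+1, pm))) (pi+1, pm) 0)
            (pi+1) pm (by rw [ht]; unfold moveHole; rw [singleton_move])
        have hne : ((pi, pm) : ℕ × ℕ) ≠ (pi+1, pm) := by
          rw [Ne, Prod.mk.injEq]; omega
        refine ⟨ihH, by omega, ihc, ?_, (fun j => if j = pi then pm else Bf j), ?_⟩
        · intro z hz
          have e1 : z ≠ (pi+1, pm) := by
            rintro rfl; simp only [Behind] at hz; omega
          have e2 : z ≠ (pi, pm) := by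
            rintro rfl; simp only [Behind] at hz; omega
          have hz1 : Behind (pi+1, pm) z := by
            simp only [Behind] at hz ⊢; omega
          rw [ihbehind z hz1, Function.update_of_ne e1, Function.update_of_ne e2]
        · intro j hj1 hj2
          by_cases hjpi : j = pi
          · -- j = pi
            subst hjpi
            have hb1 : b.2.1 (j, pm) =
                (Function.update (Function.update V (j,pm) (V (j+1, pm))) (j+1, pm) 0) (j, pm) := by
              refine ihbehind (j, pm) ?_
              simp only [Behind]; omega
            have hVp : (Function.update (Function.update V (j,pm) (V (j+1, pm))) (j+1, pm) 0)
                (j, pm) = V (j+1, pm) := by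
              rw [Function.update_of_ne hne, Function.update_self]
            refine ⟨?_, ?_, ?_, ?_, ?_⟩
            · simpa using hin.1
            · simp only [ite_self, eq_self_iff_true, if_true]
              rw [hb1, hVp]
            · simp only [ite_self, eq_self_iff_true, if_true]
              intro z hzlt
              have e1 : ((j+1, z) : ℕ × ℕ) ≠ (j+1, pm) := by
                rw [Ne, Prod.mk.injEq]; omega
              have e2 : ((j+1, z) : ℕ × ℕ) ≠ (j, pm) := by
                rw [Ne, Prod.mk.injEq]; omega
              have hbz : Behind (j+1, pm) ((j+1, z) : ℕ × ℕ) := Or.inr ⟨rfl, hzlt⟩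
              rw [ihbehind _ hbz, Function.update_of_ne e1, Function.update_of_ne e2]
            · intro hlt
              simp only [eq_self_iff_true, if_true, if_neg (by omega : ¬ j + 1 = j)]
              exact (ihrows (j+1) le_rfl hlt).2.2.2.2
            · simp only [ite_self, eq_self_iff_true, if_true]; exact le_rfl
          · -- j > pi
            obtain ⟨k1, k2, k3, k4, k5⟩ := ihrows j (by omega) hj2
            have hrne : ∀ z : ℕ, ((j+1, z) : ℕ × ℕ) ≠ (pi+1, pm) ∧
                ((j+1, z) : ℕ × ℕ) ≠ (pi, pm) := by
              intro z
              constructor <;> (rintro h; rw [Prod.mk.injEq] at h; omega)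
            simp only [if_neg hjpi]
            refine ⟨k1, ?_, ?_, ?_, by omega⟩
            · rw [k2, Function.update_of_ne (hrne _).1, Function.update_of_ne (hrne _).2]
            · intro z hzlt
              rw [k3 z hzlt, Function.update_of_ne (hrne _).1,
                Function.update_of_ne (hrne _).2]
            · intro hlt
              simp only [if_neg (by omega : ¬ j + 1 = pi)]
              exact k4 hlt

end S15
namespace S15

lemma cmp {f g : ℕ → ℕ} {T S : ℕ×ℕ→ℕ} {x x' r r' : ℕ} {c xs c' xs' : ℕ → ℕ} {m : ℕ}
    (hTmono : ∀ i j l, (i,j) ∈ cells f → (i,l) ∈ cells f → j ≤ l → T (i,j) ≤ T (i,l))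
    (hxx : x ≤ x')
    (hI : InsData f T x r c xs) (hI' : InsData g S x' r' c' xs')
    (HS : ∀ i j, 1 ≤ i → i ≤ m → 1 ≤ j → S (i,j) = if j = c i then xs i else T (i,j))
    (Hg : ∀ i, 1 ≤ i → i < r → i ≤ m → g i = f i) :
    ∀ i, 1 ≤ i → i ≤ r → i ≤ r' → i ≤ m + 1 → xs i ≤ xs' i := by
  intro i
  induction i with
  | zero => exact fun h => absurd h (by omega)
  | succ n ihn =>
    intro h1 hr hr' hm
    by_cases hn0 : n = 0
    · subst hn0
      show xs 1 ≤ xs' 1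
      rw [hI.2.1, hI'.2.1]; exact hxx
    · have h1n : 1 ≤ n := by omega
      have hxsn : xs n ≤ xs' n := ihn h1n (by omega) (by omega) (by omega)
      obtain ⟨hc1, hc2, hpre, hbump⟩ := hI.2.2.1 n h1n (by omega)
      obtain ⟨hc1', hc2', hpre', hbump'⟩ := hI'.2.2.1 n h1n (by omega)
      obtain ⟨hcf, hxsT⟩ := hI.2.2.2.1 n h1n (by omega)
      obtain ⟨hcg', hxsT'⟩ := hI'.2.2.2.1 n h1n (by omega)
      have hgn : g n = f n := Hg n h1n (by omega) (by omega)
      have hlt : c n < c' n := by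
        by_contra hle
        push_neg at hle
        have hb : xs' n < S (n, c' n) := hbump' hcg'
        have hSv : S (n, c' n) = if c' n = c n then xs n else T (n, c' n) :=
          HS n (c' n) h1n (by omega) hc1'
        by_cases he : c' n = c n
        · rw [hSv, if_pos he] at hb; omega
        · rw [hSv, if_neg he] at hb
          have : T (n, c' n) ≤ xs n := hpre (c' n) hc1' (by omega)
          omega
      have e2 : S (n, c' n) = T (n, c' n) := by
        rw [HS n (c' n) h1n (by omega) hc1', if_neg (by omega)]
      have e3 : T (n, c n) ≤ T (n, c' n) :=
        hTmono n (c n) (c' n) ⟨h1n, hc1, hcf⟩ ⟨h1n, hc1', by show c' n ≤ f n; omega⟩ (le_of_lt hlt)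
      rw [hxsT, hxsT', e2]
      exact e3

lemma termA {f g : ℕ → ℕ} {T S : ℕ×ℕ→ℕ} {x x' r r' : ℕ} {c xs c' xs' : ℕ → ℕ}
    (hTmono : ∀ i j l, (i,j) ∈ cells f → (i,l) ∈ cells f → j ≤ l → T (i,j) ≤ T (i,l))
    (hxx : x ≤ x')
    (hI : InsData f T x r c xs) (hI' : InsData g S x' r' c' xs')
    (hS : S = insResult T r c xs) (hg : g = addRow f r) : r' ≤ r := by
  have HS : ∀ i j, 1 ≤ i → i ≤ r → 1 ≤ j → S (i,j) = if j = c i then xs i else T (i,j) := by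
    intro i j h1 h2 h3
    rw [hS]; unfold insResult; dsimp only
    by_cases hji : j = c i
    · rw [if_pos ⟨h1, h2, hji⟩, if_pos hji]
    · rw [if_neg (by tauto), if_neg hji]
  have Hg : ∀ i, 1 ≤ i → i < r → i ≤ r → g i = f i := by
    intro i _ h2 _
    rw [hg]; unfold addRow; rw [Function.update_of_ne (by omega)]
  by_contra hgt
  push_neg at hgt
  have h1r : 1 ≤ r := hI.1
  have hxsr : xs r ≤ xs' r := cmp hTmono hxx hI hI' HS Hg r h1r le_rfl (by omega) (by omega)
  obtain ⟨hcg', hxsT'⟩ := hI'.2.2.2.1 r h1r hgt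
  obtain ⟨hc1', hc2', hpre', hbump'⟩ := hI'.2.2.1 r h1r (by omega)
  have hb := hbump' hcg'
  have hcr : c r = f r + 1 := hI.2.2.2.2
  have hgr : g r = f r + 1 := by rw [hg]; unfold addRow; rw [Function.update_self]
  have hSv : S (r, c' r) = if c' r = c r then xs r else T (r, c' r) := HS r (c' r) h1r le_rfl hc1'
  by_cases he : c' r = c r
  · rw [hSv, if_pos he] at hb; omega
  · rw [hSv, if_neg he] at hb
    have hpr := (hI.2.2.1 r h1r le_rfl).2.2.1 (c' r) hc1' (by omega)
    omega

end S15
namespace S15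

def Inv (S : ℕ×ℕ→ℕ) (k s' q' : ℕ) (B : ℕ → ℕ)
    (st : Set (ℕ×ℕ) × ((ℕ×ℕ) → ℕ) × (ℕ×ℕ)) : Prop :=
  st.1 = {st.2.2} ∧ 1 ≤ st.2.2.2 ∧ s' - 1 ≤ st.2.2.1 ∧
  (st.2.2.1 < k → st.2.2.2 + 1 ≤ B st.2.2.1) ∧
  ((st.2.2.1 = s' - 1 ∧ st.2.2.2 < q' ∧
      (∀ z : ℕ×ℕ, Ahead st.2.2 z → z ≠ (s'-1, q') → st.2.1 z = S z) ∧
      st.2.1 (s'-1, q') = 2*s'-3)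
   ∨ ((s'-1 < st.2.2.1 ∨ q' ≤ st.2.2.2) ∧
      (∀ z : ℕ×ℕ, Ahead st.2.2 z → st.2.1 z = S z)))

section BB

variable {f g : ℕ→ℕ} {T S : ℕ×ℕ→ℕ} {k s' q' : ℕ} {B : ℕ → ℕ}

lemma bb_preserve
    (hs'2 : 2 ≤ s') (hks : s' ≤ k)
    (PB1 : ∀ j, s'-1 ≤ j → j < k → (j+1, B j) ∈ cells f)
    (PB2 : ∀ j, s'-1 ≤ j → j < k → S (j, B j) = T (j+1, B j))
    (PB3 : ∀ j, s'-1 ≤ j → j < k → ∀ z, 1 ≤ z → z < B j → S (j+1, z) = T (j+1, z))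
    (PB4 : ∀ j, s'-1 ≤ j → j < k → j+1 < k → B j ≤ B (j+1))
    (hQ1 : q' < B (s'-1)) (hq1 : 1 ≤ q') (hq'g : q' ≤ g (s'-1))
    (hSq : ∀ z, 1 ≤ z → z < q' → S (s'-1, z) ≤ 2*s'-3)
    (hTmono : ∀ i j l, (i,j) ∈ cells f → (i,l) ∈ cells f → j ≤ l → T (i,j) ≤ T (i,l))
    (hTcol : ∀ i, 1 ≤ i → 1 ≤ f i → 2*i-1 ≤ T (i,1))
    (hgf1 : ∀ i, f i - 1 ≤ g i) (hgf2 : ∀ i, g i ≤ f i)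
    {st t} (hI : Inv S k s' q' B st) (hstep : SlideStep g st t) : Inv S k s' q' B t := by
  obtain ⟨H, V, p⟩ := st
  obtain ⟨pi, pm⟩ := p
  obtain ⟨hH, h1m, hrow, hbnd, hph⟩ := hI
  dsimp only at hH h1m hrow hbnd hph
  subst hH
  rcases hstep with ⟨hin, himp, ht⟩ | ⟨hin, himp, ht⟩ <;>
    dsimp only at hin himp ht <;> subst ht <;>
    unfold Inv <;> unfold moveHole <;>
    rw [singleton_move] <;> dsimp only
  · -- RIGHT move: new hole (pi, pm+1)
    refine ⟨rfl, by omega, hrow, ?_, ?_⟩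
    · -- bound
      intro hpik
      rcases hph with ⟨hpr, hplt, hagr, hexc⟩ | ⟨hor, hagr⟩
      · rw [hpr]; omega
      · have hb := hbnd hpik
        rcases Nat.lt_or_ge (pm+1) (B pi) with hlt | hge
        · omega
        · exfalso
          have hpmB : pm + 1 = B pi := by omega
          have hcellB : (pi+1, B pi) ∈ cells f := PB1 pi hrow hpik
          have hBle : B pi ≤ f (pi+1) := hcellB.2.2
          have hbelow : ((pi+1, pm) : ℕ×ℕ) ∈ cells g \ {((pi,pm) : ℕ×ℕ)} := by
            refine ⟨⟨by omega, h1m, ?_⟩, ?_⟩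
            · show pm ≤ g (pi+1)
              have := hgf1 (pi+1); omega
            · simp only [Set.mem_singleton_iff, Prod.mk.injEq, not_and]; omega
          have hcmp := himp hbelow
          have hv1 : V (pi, pm+1) = T (pi+1, B pi) := by
            rw [hagr (pi, pm+1) (Or.inr ⟨rfl, by omega⟩)]
            rw [show ((pi, pm+1) : ℕ×ℕ) = (pi, B pi) from by rw [hpmB]]
            exact PB2 pi hrow hpik
          have hv2 : V (pi+1, pm) = T (pi+1, pm) := by
            rw [hagr (pi+1, pm) (Or.inl (by omega))]
            exact PB3 pi hrow hpik pm h1m (by omega)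
          have hmm := hTmono (pi+1) pm (B pi) ⟨by omega, h1m, by show pm ≤ f (pi+1); omega⟩
            hcellB (by omega)
          rw [hv1, hv2] at hcmp
          omega
    · -- phases
      rcases hph with ⟨hpr, hplt, hagr, hexc⟩ | ⟨hor, hagr⟩
      · by_cases hq : pm + 1 < q'
        · left
          refine ⟨hpr, hq, ?_, ?_⟩
          · intro z hz hzne
            have e1 : z ≠ (pi, pm+1) := by
              rintro rfl; simp only [Ahead] at hz; omega
            have e2 : z ≠ (pi, pm) := by
              rintro rfl; simp only [Ahead] at hz; omega
            rw [Function.update_of_ne e1, Function.update_of_ne e2]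
            refine hagr z ?_ hzne
            simp only [Ahead] at hz ⊢; omega
          · have e1 : ((s'-1, q') : ℕ×ℕ) ≠ (pi, pm+1) := by
              rw [Ne, Prod.mk.injEq]; omega
            have e2 : ((s'-1, q') : ℕ×ℕ) ≠ (pi, pm) := by
              rw [Ne, Prod.mk.injEq]; omega
            rw [Function.update_of_ne e1, Function.update_of_ne e2]
            exact hexc
        · right
          refine ⟨Or.inr (by omega), ?_⟩
          intro z hz
          have e1 : z ≠ (pi, pm+1) := by
            rintro rfl; simp only [Ahead] at hz; omega
          have e2 : z ≠ (pi, pm) := by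
            rintro rfl; simp only [Ahead] at hz; omega
          rw [Function.update_of_ne e1, Function.update_of_ne e2]
          by_cases hze : z = (s'-1, q')
          · exfalso
            apply e1
            rw [hze, Prod.mk.injEq]
            exact ⟨hpr.symm, by omega⟩
          · refine hagr z ?_ hze
            simp only [Ahead] at hz ⊢; omega
      · right
        refine ⟨by rcases hor with h | h; exact Or.inl h; exact Or.inr (by omega), ?_⟩
        intro z hz
        have e1 : z ≠ (pi, pm+1) := by
          rintro rfl; simp only [Ahead] at hz; omega
        have e2 : z ≠ (pi, pm) := by
          rintro rfl; simp only [Ahead] at hz; omega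
        rw [Function.update_of_ne e1, Function.update_of_ne e2]
        refine hagr z ?_
        simp only [Ahead] at hz ⊢; omega
  · -- DOWN move: new hole (pi+1, pm)
    rcases hph with ⟨hpr, hplt, hagr, hexc⟩ | ⟨hor, hagr⟩
    · -- phase 1: impossible
      exfalso
      subst hpr
      have hcellB : (s'-1+1, B (s'-1)) ∈ cells f := PB1 (s'-1) le_rfl (by omega)
      have hBle : B (s'-1) ≤ f (s'-1+1) := hcellB.2.2
      have hf1 : 1 ≤ f (s'-1+1) := by omega
      have hrt : ((s'-1, pm+1) : ℕ×ℕ) ∈ cells g \ {((s'-1,pm) : ℕ×ℕ)} := by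
        refine ⟨⟨by omega, by omega, by show pm+1 ≤ g (s'-1); omega⟩, ?_⟩
        simp only [Set.mem_singleton_iff, Prod.mk.injEq, not_and]; omega
      have hcmp := himp hrt
      have hvb : V (s'-1+1, pm) = T (s'-1+1, pm) := by
        rw [hagr (s'-1+1, pm) (Or.inl (by omega)) (by rw [Ne, Prod.mk.injEq]; omega)]
        exact PB3 (s'-1) le_rfl (by omega) pm h1m (by omega)
      have ht1 := hTcol (s'-1+1) (by omega) hf1
      have htm := hTmono (s'-1+1) 1 pm ⟨by omega, le_rfl, hf1⟩
        ⟨by omega, h1m, by show pm ≤ f (s'-1+1); omega⟩ h1m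
      have hvr : V (s'-1, pm+1) ≤ 2*s'-3 := by
        by_cases hq : pm + 1 = q'
        · rw [show ((s'-1, pm+1) : ℕ×ℕ) = (s'-1, q') from by rw [hq]]
          rw [hexc]
        · rw [hagr (s'-1, pm+1) (Or.inr ⟨rfl, by omega⟩) (by rw [Ne, Prod.mk.injEq]; omega)]
          exact hSq (pm+1) (by omega) (by omega)
      rw [hvb] at hcmp
      omega
    · -- phase 2
      refine ⟨rfl, h1m, by omega, ?_, Or.inr ⟨Or.inl (by omega), ?_⟩⟩
      · intro hlt
        have hb := hbnd (by omega)
        have := PB4 pi hrow (by omega) hlt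
        omega
      · intro z hz
        have e1 : z ≠ (pi+1, pm) := by
          rintro rfl; simp only [Ahead] at hz; omega
        have e2 : z ≠ (pi, pm) := by
          rintro rfl; simp only [Ahead] at hz; omega
        rw [Function.update_of_ne e1, Function.update_of_ne e2]
        refine hagr z ?_
        simp only [Ahead] at hz ⊢; omega

lemma bb_run
    (hs'2 : 2 ≤ s') (hks : s' ≤ k)
    (PB1 : ∀ j, s'-1 ≤ j → j < k → (j+1, B j) ∈ cells f)
    (PB2 : ∀ j, s'-1 ≤ j → j < k → S (j, B j) = T (j+1, B j))
    (PB3 : ∀ j, s'-1 ≤ j → j < k → ∀ z, 1 ≤ z → z < B j → S (j+1, z) = T (j+1, z))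
    (PB4 : ∀ j, s'-1 ≤ j → j < k → j+1 < k → B j ≤ B (j+1))
    (hQ1 : q' < B (s'-1)) (hq1 : 1 ≤ q') (hq'g : q' ≤ g (s'-1))
    (hSq : ∀ z, 1 ≤ z → z < q' → S (s'-1, z) ≤ 2*s'-3)
    (hTmono : ∀ i j l, (i,j) ∈ cells f → (i,l) ∈ cells f → j ≤ l → T (i,j) ≤ T (i,l))
    (hTcol : ∀ i, 1 ≤ i → 1 ≤ f i → 2*i-1 ≤ T (i,1))
    (hgf1 : ∀ i, f i - 1 ≤ g i) (hgf2 : ∀ i, g i ≤ f i)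
    {st st'} (hch : Relation.ReflTransGen (SlideStep g) st st')
    (hbase : Inv S k s' q' B st) (hnsl : ¬ Slidable g st'.1 st'.2.2) :
    k ≤ st'.2.2.1 := by
  have hInv : Inv S k s' q' B st' := by
    clear hnsl
    induction hch with
    | refl => exact hbase
    | tail h1 h2 ih =>
        exact bb_preserve hs'2 hks PB1 PB2 PB3 PB4 hQ1 hq1 hq'g hSq hTmono hTcol hgf1 hgf2
          ih h2
  obtain ⟨H2, V2, p2⟩ := st'
  obtain ⟨a, m⟩ := p2
  obtain ⟨hH, h1m, hrow, hbnd, hph⟩ := hInv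
  dsimp only at hH h1m hrow hbnd hph ⊢
  by_contra hlt
  push_neg at hlt
  apply hnsl
  have hb := hbnd hlt
  have hcellB : (a+1, B a) ∈ cells f := PB1 a hrow hlt
  have hBle : B a ≤ f (a+1) := hcellB.2.2
  refine ⟨by rw [hH]; exact Set.mem_singleton _, Or.inr ⟨⟨by omega, h1m, ?_⟩, ?_⟩⟩
  · show m ≤ g (a+1)
    have := hgf1 (a+1); omega
  · rw [hH]
    simp only [Set.mem_singleton_iff, Prod.mk.injEq, not_and]
    omega

end BB

end S15

theorem stmt15 (n : ℕ) (f : ℕ → ℕ) (hf : IsPartitionF f) (hfn : ∀ i, n < i → f i = 0)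
    (T : ℕ × ℕ → ℕ) (hT : Symp f T) (hTe : EntriesLE f T (2 * n))
    (x x' : ℕ) (hx : 1 ≤ x) (hx' : 1 ≤ x') (hx2 : x ≤ 2 * n) (hx'2 : x' ≤ 2 * n)
    (hxx : x ≤ x')
    (g : ℕ → ℕ) (S : ℕ × ℕ → ℕ) (ρ : ℕ ⊕ ℕ) (h1 : BereleT f T x g S ρ)
    (g' : ℕ → ℕ) (S' : ℕ × ℕ → ℕ) (ρ' : ℕ ⊕ ℕ) (h2 : BereleT g S x' g' S' ρ') :
    Rle ρ' ρ := by
  obtain ⟨r, c, xs, hIns, hbr⟩ := h1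
  obtain ⟨r', c', xs', hIns', hbr'⟩ := h2
  have hTmono : ∀ i j l, (i,j) ∈ cells f → (i,l) ∈ cells f → j ≤ l → T (i,j) ≤ T (i,l) := by
    intro i j l hj hl hle
    rcases eq_or_lt_of_le hle with h | h
    · exact le_of_eq (by rw [h])
    · exact hT.1.2.1 i j l ⟨hj, Set.notMem_empty _⟩ ⟨hl, Set.notMem_empty _⟩ h
  have hTcol1 : ∀ i, 1 ≤ i → 1 ≤ f i → 2*i-1 ≤ T (i,1) := hT.2
  rcases hbr with ⟨hsymp, hgA, hSA, hρA⟩ |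
    ⟨s, hs1, hsr, hviol, hok, H1, p1, hch1, hnsl1, hgB, hρB⟩
  · -- first insertion: case A (no violation)
    subst hρA
    have hr'r : r' ≤ r := S15.termA hTmono hxx hIns hIns' hSA hgA
    have HS : ∀ i j, 1 ≤ i → i ≤ r → 1 ≤ j → S (i,j) = if j = c i then xs i else T (i,j) := by
      intro i j hi1 hi2 hj1
      rw [hSA]; unfold insResult; dsimp only
      by_cases hji : j = c i
      · rw [if_pos ⟨hi1, hi2, hji⟩, if_pos hji]
      · rw [if_neg (by tauto), if_neg hji]
    have Hg : ∀ i, 1 ≤ i → i < r → i ≤ r → g i = f i := by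
      intro i _ h2 _
      rw [hgA]; unfold addRow; rw [Function.update_of_ne (by omega)]
    rcases hbr' with ⟨_, _, _, hρ'⟩ |
      ⟨s', hs'1, hs'r', hviol', hok', H2, p2, hch2, hnsl2, hg', hρ'⟩
    · subst hρ'
      exact hr'r
    · exfalso
      have hs'2 : 2 ≤ s' := by
        by_contra hcon
        have hseq : s' = 1 := by omega
        rw [hseq] at hviol'
        have := hIns'.2.1
        omega
      have hxs := S15.cmp hTmono hxx hIns hIns' HS Hg s' (by omega)
        (le_trans hs'r' hr'r) hs'r' (by omega)
      have := hsymp s' (by omega) (le_trans hs'r' hr'r)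
      omega
  · -- first insertion: case B (violation at row s, slide removes a box in row p1.1)
    subst hρB
    have hs2 : 2 ≤ s := by
      by_contra hcon
      have hseq : s = 1 := by omega
      rw [hseq] at hviol
      have := hIns.2.1
      omega
    obtain ⟨rm1H, rm1r, rm1c, rm1behind, B, rm1rows⟩ :=
      S15.run_main f hch1 (bereleMid T s c xs) (s-1) 1 rfl
    dsimp only at rm1H rm1r rm1c rm1behind rm1rows
    rcases hbr' with ⟨_, _, _, hρ'⟩ |
      ⟨s', hs'1, hs'r', hviol', hok', H2, p2, hch2, hnsl2, hg', hρ'⟩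
    · subst hρ'
      exact trivial
    · subst hρ'
      have hs'2 : 2 ≤ s' := by
        by_contra hcon
        have hseq : s' = 1 := by omega
        rw [hseq] at hviol'
        have := hIns'.2.1
        omega
      have hss' : s ≤ s' := by
        by_contra hcon
        push_neg at hcon
        have HS : ∀ i j, 1 ≤ i → i ≤ s-2 → 1 ≤ j →
            S (i,j) = if j = c i then xs i else T (i,j) := by
          intro i j hi1 hi2 hj1
          rw [rm1behind (i,j) (Or.inl (by omega))]
          unfold bereleMid
          rw [if_neg (by rw [Prod.mk.injEq]; omega)]
          by_cases hji : j = c i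
          · rw [if_pos ⟨hi1, by omega, hji⟩, if_pos hji]
          · rw [if_neg (by rintro ⟨_, _, hcc⟩; exact hji hcc), if_neg hji]
        have Hg : ∀ i, 1 ≤ i → i < r → i ≤ s-2 → g i = f i := by
          intro i _ _ h3
          rw [hgB]; unfold rmRow
          rw [Function.update_of_ne (by omega)]
        have hxs := S15.cmp hTmono hxx hIns hIns' HS Hg s' (by omega)
          (by omega) hs'r' (by omega)
        have := hok s' (by omega) (by omega)
        omega
      rcases Nat.lt_or_ge (s'-1) p1.1 with hki | hki
      · -- hard case: first slide went strictly below row s'-1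
        obtain ⟨hcg', hxsT'⟩ := hIns'.2.2.2.1 (s'-1) (by omega) (by omega)
        obtain ⟨hc1', hc2', hpre', hbump'⟩ := hIns'.2.2.1 (s'-1) (by omega) (by omega)
        rw [show s' - 1 + 1 = s' from by omega] at hxsT'
        have hbk := hbump' hcg'
        have hok'v := hok' (s'-1) (by omega) (by omega)
        have hSexc : S (s'-1, c' (s'-1)) = 2*s'-2 := by omega
        have hxs'v : xs' (s'-1) = 2*s'-3 := by omega
        have PB1 : ∀ j, s'-1 ≤ j → j < p1.1 → (j+1, B j) ∈ cells f := fun j hj1 hj2 =>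
          (rm1rows j (by omega) hj2).1
        have hmid : ∀ i j, s ≤ i → bereleMid T s c xs (i, j) = T (i, j) := by
          intro i j hi
          unfold bereleMid
          rw [if_neg (by rw [Prod.mk.injEq]; omega),
            if_neg (by rintro ⟨_, hb2, _⟩; omega)]
        have PB2 : ∀ j, s'-1 ≤ j → j < p1.1 → S (j, B j) = T (j+1, B j) := by
          intro j hj1 hj2
          rw [(rm1rows j (by omega) hj2).2.1, hmid (j+1) _ (by omega)]
        have PB3 : ∀ j, s'-1 ≤ j → j < p1.1 → ∀ z, 1 ≤ z → z < B j →
            S (j+1, z) = T (j+1, z) := by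
          intro j hj1 hj2 z _ hz
          rw [(rm1rows j (by omega) hj2).2.2.1 z hz, hmid (j+1) _ (by omega)]
        have PB4 : ∀ j, s'-1 ≤ j → j < p1.1 → j+1 < p1.1 → B j ≤ B (j+1) := fun j hj1 hj2 hj3 =>
          (rm1rows j (by omega) hj2).2.2.2.1 hj3
        have hgf1 : ∀ i, f i - 1 ≤ g i := by
          intro i
          rw [hgB]; unfold rmRow
          by_cases hik : i = p1.1
          · subst hik; rw [Function.update_self]
          · rw [Function.update_of_ne hik]; omega
        have hgf2 : ∀ i, g i ≤ f i := by
          intro i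
          rw [hgB]; unfold rmRow
          by_cases hik : i = p1.1
          · subst hik; rw [Function.update_self]; omega
          · rw [Function.update_of_ne hik]
        have hcellB : (s'-1+1, B (s'-1)) ∈ cells f := PB1 (s'-1) le_rfl hki
        have hB1 : 1 ≤ B (s'-1) := hcellB.2.1
        have hBf : B (s'-1) ≤ f (s'-1+1) := hcellB.2.2
        have hBval : S (s'-1, B (s'-1)) = T (s'-1+1, B (s'-1)) := PB2 (s'-1) le_rfl hki
        have hTlow : 2*(s'-1+1)-1 ≤ T (s'-1+1, 1) := hTcol1 _ (by omega) (by omega)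
        have hTm2 : T (s'-1+1, 1) ≤ T (s'-1+1, B (s'-1)) :=
          hTmono _ 1 _ ⟨by omega, le_rfl, by show 1 ≤ f (s'-1+1); omega⟩ hcellB hB1
        have hQ1 : c' (s'-1) < B (s'-1) := by
          rcases Nat.lt_or_ge (c' (s'-1)) (B (s'-1)) with h | h
          · exact h
          · exfalso
            rcases eq_or_lt_of_le h with he | hlt2
            · rw [← he] at hSexc
              rw [hBval] at hSexc
              omega
            · have := hpre' (B (s'-1)) hB1 hlt2
              rw [hBval] at this
              omega
        have hSq : ∀ z, 1 ≤ z → z < c' (s'-1) → S (s'-1, z) ≤ 2*s'-3 := by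
          intro z hz1 hz2
          have := hpre' z hz1 hz2
          omega
        have hU2 : ∀ z : ℕ×ℕ, S15.Ahead (s'-1, 1) z → z ≠ (s'-1, c' (s'-1)) →
            bereleMid S s' c' xs' z = S z := by
          intro z hz hzne
          obtain ⟨z1, z2⟩ := z
          unfold bereleMid
          simp only [S15.Ahead] at hz
          rw [if_neg (by rw [Prod.mk.injEq]; omega)]
          rw [if_neg ?_]
          rintro ⟨ha, hb, hc⟩
          apply hzne
          rw [Prod.mk.injEq]
          have hz1e : z1 = s' - 1 := by omega
          subst hz1e
          exact ⟨rfl, hc⟩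
        have hU2exc : 1 < c' (s'-1) → bereleMid S s' c' xs' (s'-1, c' (s'-1)) = 2*s'-3 := by
          intro hgt
          unfold bereleMid
          rw [if_neg (by rw [Prod.mk.injEq]; omega),
            if_pos ⟨by omega, by omega, rfl⟩]
          exact hxs'v
        have hbase : S15.Inv S p1.1 s' (c' (s'-1)) B
            ({((s'-1, 1) : ℕ×ℕ)}, bereleMid S s' c' xs', ((s'-1, 1) : ℕ×ℕ)) := by
          refine ⟨rfl, le_rfl, le_rfl, fun _ => by dsimp only; omega, ?_⟩
          by_cases hq : c' (s'-1) = 1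
          · right
            refine ⟨Or.inr (by dsimp only; omega), ?_⟩
            intro z hz
            refine hU2 z hz ?_
            rintro rfl
            simp only [S15.Ahead] at hz
            omega
          · left
            exact ⟨rfl, by dsimp only; omega, fun z hz hzne => hU2 z hz hzne,
              hU2exc (by omega)⟩
        have hfin := S15.bb_run hs'2 (by omega) PB1 PB2 PB3 PB4 hQ1 hc1' hcg' hSq
          hTmono hTcol1 hgf1 hgf2 hch2 hbase hnsl2
        dsimp only at hfin
        exact hfin
      · -- easy case: first slide terminated at or above row s'-1
        obtain ⟨_, hmr, _, _, _⟩ :=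
          S15.run_main g hch2 (bereleMid S s' c' xs') (s'-1) 1 rfl
        dsimp only at hmr
        show p1.1 ≤ p2.1
        omega
end

section
/- (Berele row bumping lemma, decreasing case) Let T be a symplectic tableau with entries in [2n] and x > x' in [2n]. Let r be the terminal row of the Berele insertion of x into T, and r' the terminal row of the Berele insertion of x' into T ←ᴮ x. Then r < r' in the ordered set 1 < 2 < ⋯ < 2̄ < 1̄. -/
open scoped Classical

private lemma mem_cells_iff {f : ℕ → ℕ} {a b : ℕ} :
    (a, b) ∈ cells f ↔ 1 ≤ a ∧ 1 ≤ b ∧ b ≤ f a := Iff.rfl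

private lemma mem_cells_mono {f : ℕ → ℕ} (hdec : ∀ i j, 1 ≤ i → i ≤ j → f j ≤ f i)
    {a b a' b' : ℕ} (h : (a, b) ∈ cells f) (ha1 : 1 ≤ a') (ha : a' ≤ a)
    (hb1 : 1 ≤ b') (hb : b' ≤ b) : (a', b') ∈ cells f := by
  obtain ⟨h1, h2, h3⟩ := h
  exact ⟨ha1, hb1, le_trans (le_trans hb h3) (hdec a' a ha1 ha)⟩

private lemma pair_ne_of_fst {a b c d : ℕ} (h : a ≠ c) : ((a, b) : ℕ × ℕ) ≠ (c, d) := by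
  simp only [ne_eq, Prod.mk.injEq]
  tauto

private lemma pair_ne_of_snd {a b c d : ℕ} (h : b ≠ d) : ((a, b) : ℕ × ℕ) ≠ (c, d) := by
  simp only [ne_eq, Prod.mk.injEq]
  tauto

private lemma update2_ne {U : ℕ × ℕ → ℕ} {p q z : ℕ × ℕ} (h1 : z ≠ p) (h2 : z ≠ q) :
    Function.update (Function.update U p (U q)) q 0 z = U z := by
  rw [Function.update_of_ne h2, Function.update_of_ne h1]

private lemma update2_p {U : ℕ × ℕ → ℕ} {p q : ℕ × ℕ} (h : p ≠ q) :
    Function.update (Function.update U p (U q)) q 0 p = U q := by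
  rw [Function.update_of_ne h, Function.update_self]

private lemma singleton_move {p q : ℕ × ℕ} :
    (({p} : Set (ℕ × ℕ)) \ {p}) ∪ {q} = {q} := by simp

/-- Invariant maintained along the first sliding. -/
private def Inv1 (f : ℕ → ℕ) (M : ℕ × ℕ → ℕ) (s0 : ℕ)
    (st : Set (ℕ × ℕ) × (ℕ × ℕ → ℕ) × (ℕ × ℕ)) : Prop :=
  ∃ R : ℕ → ℕ, R 0 = s0 ∧ st.1 = {st.2.2} ∧ st.2.2 ∈ cells f ∧ 1 ≤ st.2.2.2 ∧
    s0 ≤ st.2.2.1 ∧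
    (∀ l, l + 1 < st.2.2.2 → R l ≤ R (l + 1)) ∧
    R (st.2.2.2 - 1) ≤ st.2.2.1 ∧
    (∀ l, 1 ≤ l → l < st.2.2.2 →
      st.2.1 (R l, l) = M (R l, l + 1) ∧ (R l, l + 1) ∈ cells f) ∧
    (∀ a b, 1 ≤ b →
      ((b < st.2.2.2 ∧ (a < R (b - 1) ∨ R b < a)) ∨
        (b = st.2.2.2 ∧ (a < R (b - 1) ∨ st.2.2.1 < a)) ∨ st.2.2.2 < b) →
      st.2.1 (a, b) = M (a, b))

private lemma Inv1_step {f : ℕ → ℕ} {M : ℕ × ℕ → ℕ} {s0 : ℕ}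
    {st t : Set (ℕ × ℕ) × (ℕ × ℕ → ℕ) × (ℕ × ℕ)}
    (hinv : Inv1 f M s0 st) (hst : SlideStep f st t) : Inv1 f M s0 t := by
  obtain ⟨H, U, p⟩ := st
  obtain ⟨pa, pb⟩ := p
  obtain ⟨R, hR0, hH, hcell, hpb1, hpa, hmono, hRj, hiv, hout⟩ := hinv
  simp only at hR0 hH hcell hpb1 hpa hmono hRj hiv hout
  rcases hst with ⟨hmem, _, ht⟩ | ⟨hmem, _, ht⟩
  · -- right move : new hole (pa, pb+1)
    subst ht
    simp only [moveHole, hH] at hmem ⊢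
    obtain ⟨hqcell, -⟩ := hmem
    set U' := Function.update (Function.update U (pa, pb) (U (pa, pb + 1))) (pa, pb + 1) 0 with hU'
    refine ⟨Function.update R pb pa, ?_, ?_, hqcell, ?_, ?_, ?_, ?_, ?_, ?_⟩
    · rw [Function.update_of_ne (by omega)]; exact hR0
    · exact singleton_move
    · show 1 ≤ pb + 1
      omega
    · exact hpa
    · -- monotone
      intro l hl
      simp only at hl
      rcases Nat.lt_or_ge (l + 1) pb with h | h
      · rw [Function.update_of_ne (by omega), Function.update_of_ne (by omega)]
        exact hmono l h
      · have hl1 : l + 1 = pb := by omega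
        rw [Function.update_of_ne (by omega), hl1, Function.update_self,
          show l = pb - 1 by omega]
        exact hRj
    · show Function.update R pb pa ((pb + 1) - 1) ≤ pa
      rw [Nat.add_sub_cancel, Function.update_self]
    · -- exit values
      intro l hl1 hl2
      simp only at hl2 ⊢
      rcases Nat.lt_or_ge l pb with h | h
      · rw [Function.update_of_ne (by omega : l ≠ pb)]
        obtain ⟨hv, hc⟩ := hiv l hl1 h
        refine ⟨?_, hc⟩
        rw [hU', update2_ne (pair_ne_of_snd (by omega)) (pair_ne_of_snd (by omega))]
        exact hv
      · have hl1' : l = pb := by omega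
        subst hl1'
        rw [Function.update_self]
        refine ⟨?_, hqcell⟩
        rw [hU', update2_p (pair_ne_of_snd (by omega))]
        exact hout pa (l + 1) (by omega) (by right; right; omega)
    · -- untouched
      intro a b hb1 hcond
      simp only at hcond ⊢
      have e1 : (b - 1 ≠ pb ∧ Function.update R pb pa (b - 1) = R (b - 1)) ∨ (b - 1 = pb ∧
          Function.update R pb pa (b - 1) = pa) := by
        rcases Nat.decEq (b - 1) pb with h | h
        · exact Or.inl ⟨h, Function.update_of_ne h _ _⟩
        · exact Or.inr ⟨h, by rw [h, Function.update_self]⟩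
      have e2 : (b ≠ pb ∧ Function.update R pb pa b = R b) ∨ (b = pb ∧
          Function.update R pb pa b = pa) := by
        rcases Nat.decEq b pb with h | h
        · exact Or.inl ⟨h, Function.update_of_ne h _ _⟩
        · exact Or.inr ⟨h, by rw [h, Function.update_self]⟩
      rcases Nat.lt_or_ge b pb with h | h
      · -- b < pb : only first disjunct of hcond possible
        have h2 : a < R (b - 1) ∨ R b < a := by
          rcases hcond with ⟨h1, h2⟩ | ⟨h1, h2⟩ | h1
          · rcases e1 with ⟨ea, ea'⟩ | ⟨eb, eb'⟩ <;> rcases e2 with ⟨ec, ec'⟩ | ⟨ed, ed'⟩ <;> omega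
          · omega
          · omega
        rw [hU', update2_ne (pair_ne_of_snd (by omega)) (pair_ne_of_snd (by omega))]
        exact hout a b hb1 (Or.inl ⟨h, h2⟩)
      rcases Nat.lt_or_ge b (pb + 1) with h' | h'
      · -- b = pb
        have hbpb : b = pb := by omega
        have h2 : a < R (b - 1) ∨ pa < a := by
          rcases hcond with ⟨h1, h2⟩ | ⟨h1, h2⟩ | h1
          · rcases e1 with ⟨ea, ea'⟩ | ⟨eb, eb'⟩ <;> rcases e2 with ⟨ec, ec'⟩ | ⟨ed, ed'⟩ <;> omega
          · omega
          · omega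
        have hna : a ≠ pa := by
          have hx2 : R (b - 1) ≤ pa := by rw [hbpb]; exact hRj
          omega
        rw [hU', update2_ne (pair_ne_of_fst hna) (pair_ne_of_snd (by omega))]
        exact hout a b hb1 (Or.inr (Or.inl ⟨hbpb, h2⟩))
      rcases Nat.lt_or_ge b (pb + 2) with h'' | h''
      · -- b = pb + 1
        have hbpb : b = pb + 1 := by omega
        have hna : a ≠ pa := by
          rcases hcond with ⟨h1, h2⟩ | ⟨h1, h2⟩ | h1
          · omega
          · rcases e1 with ⟨ea, ea'⟩ | ⟨eb, eb'⟩ <;> omega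
          · omega
        rw [hU', update2_ne (pair_ne_of_snd (by omega)) (pair_ne_of_fst hna)]
        exact hout a b hb1 (Or.inr (Or.inr (by omega)))
      · -- b > pb + 1
        rw [hU', update2_ne (pair_ne_of_snd (by omega)) (pair_ne_of_snd (by omega))]
        exact hout a b hb1 (Or.inr (Or.inr (by omega)))
  · -- down move : new hole (pa+1, pb)
    subst ht
    simp only [moveHole, hH] at hmem ⊢
    obtain ⟨hqcell, -⟩ := hmem
    set U' := Function.update (Function.update U (pa, pb) (U (pa + 1, pb))) (pa + 1, pb) 0
      with hU'
    have hRj' : R (pb - 1) ≤ pa := hRj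
    refine ⟨R, hR0, singleton_move, hqcell, ?_, ?_, hmono, ?_, ?_, ?_⟩
    · show (1 : ℕ) ≤ pb
      exact hpb1
    · show s0 ≤ pa + 1
      omega
    · show R (pb - 1) ≤ pa + 1
      omega
    · show ∀ l, 1 ≤ l → l < pb → U' (R l, l) = M (R l, l + 1) ∧ (R l, l + 1) ∈ cells f
      intro l hl1 hl2
      obtain ⟨hv, hc⟩ := hiv l hl1 hl2
      refine ⟨?_, hc⟩
      rw [hU', update2_ne (pair_ne_of_snd (by omega)) (pair_ne_of_snd (by omega))]
      exact hv
    · show ∀ a b, 1 ≤ b → ((b < pb ∧ (a < R (b - 1) ∨ R b < a)) ∨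
        (b = pb ∧ (a < R (b - 1) ∨ pa + 1 < a)) ∨ pb < b) → U' (a, b) = M (a, b)
      intro a b hb1 hcond
      have hcond' : (b < pb ∧ (a < R (b - 1) ∨ R b < a)) ∨
          (b = pb ∧ (a < R (b - 1) ∨ pa < a)) ∨ pb < b := by
        rcases hcond with ⟨h1, h2⟩ | ⟨h1, h2⟩ | h1
        · exact Or.inl ⟨h1, h2⟩
        · exact Or.inr (Or.inl ⟨h1, by omega⟩)
        · exact Or.inr (Or.inr h1)
      have hRb : R (b - 1) ≤ pa ∨ b ≠ pb := by
        rcases Nat.decEq b pb with h | h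
        · exact Or.inr h
        · rw [h]; exact Or.inl hRj'
      have hne1 : ((a : ℕ), b) ≠ ((pa : ℕ), pb) := by
        rcases hcond' with ⟨h1, h2⟩ | ⟨h1, h2⟩ | h1
        · exact pair_ne_of_snd (by omega)
        · refine pair_ne_of_fst ?_
          rcases hRb with h3 | h3
          · omega
          · omega
        · exact pair_ne_of_snd (by omega)
      have hne2 : ((a : ℕ), b) ≠ ((pa + 1 : ℕ), pb) := by
        rcases hcond with ⟨h1, h2⟩ | ⟨h1, h2⟩ | h1
        · exact pair_ne_of_snd (by omega)
        · refine pair_ne_of_fst ?_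
          rcases hRb with h3 | h3
          · omega
          · omega
        · exact pair_ne_of_snd (by omega)
      rw [hU', update2_ne hne1 hne2]
      exact hout a b hb1 hcond'
private lemma slide1_facts {f : ℕ → ℕ} {M : ℕ × ℕ → ℕ} {s0 : ℕ}
    (hstart : (s0, 1) ∈ cells f)
    {H' : Set (ℕ × ℕ)} {S : ℕ × ℕ → ℕ} {p' : ℕ × ℕ}
    (hrtg : Relation.ReflTransGen (SlideStep f) ({(s0, 1)}, M, (s0, 1)) (H', S, p'))
    (hstop : ¬ Slidable f H' p') :
    ∃ R : ℕ → ℕ, R 0 = s0 ∧ s0 ≤ p'.1 ∧ 1 ≤ p'.2 ∧ p' ∈ cells f ∧ p'.2 = f p'.1 ∧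
      R p'.2 = p'.1 ∧
      (∀ l, l + 1 ≤ p'.2 → R l ≤ R (l + 1)) ∧
      (∀ l, 1 ≤ l → l < p'.2 → S (R l, l) = M (R l, l + 1) ∧ (R l, l + 1) ∈ cells f) ∧
      (∀ a b, 1 ≤ b → ((b ≤ p'.2 ∧ (a < R (b - 1) ∨ R b < a)) ∨ p'.2 < b) →
        S (a, b) = M (a, b)) := by
  have hinv : Inv1 f M s0 (H', S, p') := by
    have : ∀ st, Relation.ReflTransGen (SlideStep f) ({((s0 : ℕ), (1 : ℕ))}, M, (s0, 1)) st →
        Inv1 f M s0 st := by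
      intro st h
      induction h with
      | refl =>
        refine ⟨fun _ => s0, rfl, rfl, hstart, le_refl 1, le_refl s0, ?_, le_refl s0, ?_, ?_⟩
        · intro l hl
          exact le_refl s0
        · intro l hl1 hl2
          have h2' : l < 1 := hl2
          omega
        · intro a b hb1 _
          rfl
      | tail hab hbc ih => exact Inv1_step ih hbc
    exact this _ hrtg
  obtain ⟨R, hR0, hH, hcell, hq1, hk, hmono, hRj, hiv, hout⟩ := hinv
  simp only at hR0 hH hcell hq1 hk hmono hRj hiv hout
  -- terminal column is at the end of its row
  have hpH : p' ∈ H' := by rw [hH]; exact rfl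
  have hfk : p'.2 = f p'.1 := by
    have h1 : (p'.1, p'.2 + 1) ∉ cells f \ H' := by
      intro hc
      exact hstop ⟨hpH, Or.inl hc⟩
    have h2 : (p'.1, p'.2 + 1) ∉ H' := by
      rw [hH]
      intro hc
      have := Set.mem_singleton_iff.mp hc
      exact absurd (congrArg Prod.snd this) (by simp)
    have h3 : (p'.1, p'.2 + 1) ∉ cells f := fun hc => h1 ⟨hc, h2⟩
    have h4 : p'.2 ≤ f p'.1 := hcell.2.2
    by_contra hne
    refine h3 ⟨hcell.1, ?_, ?_⟩
    · show 1 ≤ p'.2 + 1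
      omega
    · show p'.2 + 1 ≤ f p'.1
      omega
  refine ⟨Function.update R p'.2 p'.1, ?_, hk, hq1, hcell, hfk, ?_, ?_, ?_, ?_⟩
  · rw [Function.update_of_ne (by omega)]; exact hR0
  · rw [Function.update_self]
  · intro l hl
    rcases Nat.lt_or_ge (l + 1) p'.2 with h | h
    · rw [Function.update_of_ne (by omega), Function.update_of_ne (by omega)]
      exact hmono l h
    · have hl1 : l + 1 = p'.2 := by omega
      rw [Function.update_of_ne (by omega), hl1, Function.update_self,
        show l = p'.2 - 1 by omega]
      exact hRj
  · intro l hl1 hl2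
    rw [Function.update_of_ne (by omega)]
    exact hiv l hl1 hl2
  · intro a b hb1 hcond
    have e1 : (b - 1 ≠ p'.2 ∧ Function.update R p'.2 p'.1 (b - 1) = R (b - 1)) ∨
        (b - 1 = p'.2 ∧ Function.update R p'.2 p'.1 (b - 1) = p'.1) := by
      rcases Nat.decEq (b - 1) p'.2 with h | h
      · exact Or.inl ⟨h, Function.update_of_ne h _ _⟩
      · exact Or.inr ⟨h, by rw [h, Function.update_self]⟩
    have e2 : (b ≠ p'.2 ∧ Function.update R p'.2 p'.1 b = R b) ∨
        (b = p'.2 ∧ Function.update R p'.2 p'.1 b = p'.1) := by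
      rcases Nat.decEq b p'.2 with h | h
      · exact Or.inl ⟨h, Function.update_of_ne h _ _⟩
      · exact Or.inr ⟨h, by rw [h, Function.update_self]⟩
    apply hout a b hb1
    rcases hcond with ⟨h1, h2⟩ | h1
    · rcases Nat.lt_or_ge b p'.2 with h | h
      · left
        refine ⟨h, ?_⟩
        rcases e1 with ⟨ea, ea'⟩ | ⟨eb, eb'⟩ <;> rcases e2 with ⟨ec, ec'⟩ | ⟨ed, ed'⟩ <;> omega
      · have hb : b = p'.2 := by omega
        right; left
        refine ⟨hb, ?_⟩
        rcases e1 with ⟨ea, ea'⟩ | ⟨eb, eb'⟩ <;> rcases e2 with ⟨ec, ec'⟩ | ⟨ed, ed'⟩ <;> omega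
    · right; right; exact h1
/-- Invariant for the second sliding: the hole stays strictly above the depth
function `R` of the first sliding. -/
private def Inv2 (g : ℕ → ℕ) (M' : ℕ × ℕ → ℕ) (q : ℕ) (R : ℕ → ℕ)
    (st : Set (ℕ × ℕ) × (ℕ × ℕ → ℕ) × (ℕ × ℕ)) : Prop :=
  st.1 = {st.2.2} ∧ st.2.2 ∈ cells g ∧ 1 ≤ st.2.2.2 ∧
    (st.2.2.2 ≤ q → st.2.2.1 < R st.2.2.2) ∧
    (∀ z : ℕ × ℕ, (z.2 = st.2.2.2 ∧ st.2.2.1 < z.1) ∨ st.2.2.2 < z.2 → st.2.1 z = M' z)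

private lemma Inv2_step {f g : ℕ → ℕ} {k q : ℕ} {R : ℕ → ℕ} {M' : ℕ × ℕ → ℕ}
    (hdec : ∀ i j, 1 ≤ i → i ≤ j → f j ≤ f i)
    (hk1 : 1 ≤ k)
    (hcg : ∀ z : ℕ × ℕ, z ∈ cells g ↔ z ∈ cells f ∧ z ≠ (k, q))
    (hRq : R q = k)
    (hRchain : ∀ b, b ≤ q → R b ≤ k)
    (hRmono : ∀ l, l + 1 ≤ q → R l ≤ R (l + 1))
    (hRpos : ∀ b, b ≤ q → 2 ≤ R b)
    (hRcell : ∀ b, 1 ≤ b → b < q → (R b, b + 1) ∈ cells f)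
    (hkey : ∀ b, 1 ≤ b → b < q → M' (R b - 1, b + 1) < M' (R b, b))
    {st t : Set (ℕ × ℕ) × (ℕ × ℕ → ℕ) × (ℕ × ℕ)}
    (hinv : Inv2 g M' q R st) (hst : SlideStep g st t) : Inv2 g M' q R t := by
  obtain ⟨H, U, p⟩ := st
  obtain ⟨pa, pb⟩ := p
  obtain ⟨hH, hcell, hpb1, hdepth, hun⟩ := hinv
  simp only at hH hcell hpb1 hdepth hun
  rcases hst with ⟨hmem, _, ht⟩ | ⟨hmem, hcmp, ht⟩
  · -- right move
    subst ht
    simp only [moveHole, hH] at hmem ⊢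
    obtain ⟨hqcell, -⟩ := hmem
    set U' := Function.update (Function.update U (pa, pb) (U (pa, pb + 1))) (pa, pb + 1) 0
      with hU'
    refine ⟨singleton_move, hqcell, ?_, ?_, ?_⟩
    · show (1 : ℕ) ≤ pb + 1
      omega
    · show pb + 1 ≤ q → pa < R (pb + 1)
      intro hq
      have h1 : pa < R pb := hdepth (by omega)
      have h2 : R pb ≤ R (pb + 1) := hRmono pb hq
      omega
    · show ∀ z : ℕ × ℕ, (z.2 = pb + 1 ∧ pa < z.1) ∨ pb + 1 < z.2 → U' z = M' z
      intro z hz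
      obtain ⟨za, zb⟩ := z
      simp only at hz
      have hne1 : ((za : ℕ), zb) ≠ ((pa : ℕ), pb) := by
        rcases hz with ⟨h1, h2⟩ | h1
        · exact pair_ne_of_snd (by omega)
        · exact pair_ne_of_snd (by omega)
      have hne2 : ((za : ℕ), zb) ≠ ((pa : ℕ), pb + 1) := by
        rcases hz with ⟨h1, h2⟩ | h1
        · exact pair_ne_of_fst (by omega)
        · exact pair_ne_of_snd (by omega)
      rw [hU', update2_ne hne1 hne2]
      apply hun
      rcases hz with ⟨h1, h2⟩ | h1
      · right; omega
      · right; omega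
  · -- down move
    subst ht
    simp only [moveHole, hH] at hmem hcmp ⊢
    obtain ⟨hqcell, -⟩ := hmem
    set U' := Function.update (Function.update U (pa, pb) (U (pa + 1, pb))) (pa + 1, pb) 0
      with hU'
    -- the crucial blocking argument: the hole cannot descend to depth R pb
    have hblock : pb ≤ q → pa + 1 < R pb := by
      intro hq
      have h1 : pa < R pb := hdepth hq
      rcases Nat.lt_or_ge (pa + 1) (R pb) with h | h
      · exact h
      · -- pa + 1 = R pb : derive a contradiction
        exfalso
        have hpa1 : pa + 1 = R pb := by omega
        rcases Nat.lt_or_ge pb q with hbq | hbq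
        · -- pb < q : compare the entries
          have hrc : ((pa : ℕ), pb + 1) ∈ cells g \ {((pa : ℕ), pb)} := by
            constructor
            · rw [hcg]
              constructor
              · have hc := hRcell pb hpb1 hbq
                have h2 : 2 ≤ R pb := hRpos pb (by omega)
                exact mem_cells_mono hdec hc (by omega) (by omega) (by omega) (by omega)
              · refine pair_ne_of_fst ?_
                have h3 : R pb ≤ k := hRchain pb (by omega)
                omega
            · exact pair_ne_of_snd (by omega)
          have hle := hcmp hrc
          have e1 : U (pa + 1, pb) = M' (pa + 1, pb) := hun (pa + 1, pb) (Or.inl ⟨rfl, by omega⟩)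
          have e2 : U (pa, pb + 1) = M' (pa, pb + 1) := hun (pa, pb + 1) (Or.inr (by omega))
          have hk2 := hkey pb hpb1 hbq
          rw [e1, e2] at hle
          rw [hpa1] at hle
          rw [show ((R pb - 1 : ℕ), pb + 1) = ((pa : ℕ), pb + 1) by
            refine congrArg (fun u => (u, pb + 1)) ?_
            omega] at hk2
          omega
        · -- pb = q : the cell below is the removed corner
          have hbq' : pb = q := by omega
          have : ((pa + 1 : ℕ), pb) ∈ cells g := hqcell
          rw [hcg] at this
          refine this.2 ?_
          have h3 : R pb = k := by rw [hbq']; exact hRq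
          refine congrArg₂ Prod.mk ?_ ?_ <;> omega
    refine ⟨singleton_move, hqcell, hpb1, ?_, ?_⟩
    · show pb ≤ q → pa + 1 < R pb
      exact hblock
    · show ∀ z : ℕ × ℕ, (z.2 = pb ∧ pa + 1 < z.1) ∨ pb < z.2 → U' z = M' z
      intro z hz
      obtain ⟨za, zb⟩ := z
      simp only at hz
      have hne1 : ((za : ℕ), zb) ≠ ((pa : ℕ), pb) := by
        rcases hz with ⟨h1, h2⟩ | h1
        · exact pair_ne_of_fst (by omega)
        · exact pair_ne_of_snd (by omega)
      have hne2 : ((za : ℕ), zb) ≠ ((pa + 1 : ℕ), pb) := by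
        rcases hz with ⟨h1, h2⟩ | h1
        · exact pair_ne_of_fst (by omega)
        · exact pair_ne_of_snd (by omega)
      rw [hU', update2_ne hne1 hne2]
      apply hun
      rcases hz with ⟨h1, h2⟩ | h1
      · left; exact ⟨h1, by omega⟩
      · right; exact h1

private lemma slide2_bound {f g : ℕ → ℕ}
    (hdec : ∀ i j, 1 ≤ i → i ≤ j → f j ≤ f i)
    {k q : ℕ} (hk1 : 1 ≤ k) (hq1 : 1 ≤ q) (hq : q = f k)
    (hcg : ∀ z : ℕ × ℕ, z ∈ cells g ↔ z ∈ cells f ∧ z ≠ (k, q))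
    {R : ℕ → ℕ} {M' : ℕ × ℕ → ℕ} {s2 : ℕ}
    (hRq : R q = k)
    (hRchain : ∀ b, b ≤ q → R b ≤ k)
    (hRmono : ∀ l, l + 1 ≤ q → R l ≤ R (l + 1))
    (hRpos : ∀ b, b ≤ q → 2 ≤ R b)
    (hs2R : s2 < R 1)
    (hRcell : ∀ b, 1 ≤ b → b < q → (R b, b + 1) ∈ cells f)
    (hkey : ∀ b, 1 ≤ b → b < q → M' (R b - 1, b + 1) < M' (R b, b))
    {H2 : Set (ℕ × ℕ)} {S' : ℕ × ℕ → ℕ} {p'' : ℕ × ℕ}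
    (hstart : (s2, 1) ∈ cells g)
    (hrtg : Relation.ReflTransGen (SlideStep g) ({(s2, 1)}, M', (s2, 1)) (H2, S', p'')) :
    p''.1 < k := by
  have hinv : Inv2 g M' q R (H2, S', p'') := by
    have : ∀ st, Relation.ReflTransGen (SlideStep g) ({((s2 : ℕ), (1 : ℕ))}, M', (s2, 1)) st →
        Inv2 g M' q R st := by
      intro st h
      induction h with
      | refl =>
        refine ⟨rfl, hstart, le_refl 1, ?_, ?_⟩
        · intro h1
          show s2 < R 1
          exact hs2R
        · intro z hz
          rfl
      | tail hab hbc ih =>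
        exact Inv2_step hdec hk1 hcg hRq hRchain hRmono hRpos hRcell hkey ih hbc
    exact this _ hrtg
  obtain ⟨hH, hcell, hq1', hdepth, _⟩ := hinv
  simp only at hcell hq1' hdepth
  rcases le_or_gt p''.2 q with h | h
  · have h1 : p''.1 < R p''.2 := hdepth h
    have h2 : R p''.2 ≤ k := hRchain _ h
    omega
  · rw [hcg] at hcell
    obtain ⟨hcf, hne⟩ := hcell
    obtain ⟨c1, c2, c3⟩ := hcf
    by_contra hcon
    have hkp : k ≤ p''.1 := by omega
    have := hdec k p''.1 hk1 hkp
    omega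
/-- Comparison of two successive insertions: route weakly left, letters strictly
smaller. -/
private lemma ins_compare {f g : ℕ → ℕ} {T S : ℕ × ℕ → ℕ} {x x' r r' : ℕ}
    {c xs c' xs' : ℕ → ℕ}
    (hIns1 : InsData f T x r c xs) (hIns2 : InsData g S x' r' c' xs')
    {m mc : ℕ} (hmcm : mc ≤ m) (hmr : m ≤ r) (hmmc : m ≤ mc + 1)
    (hxx : x' < x)
    (hgf : ∀ i, 1 ≤ i → i < m → g i = f i)
    (hE1 : ∀ i, 1 ≤ i → i ≤ mc → S (i, c i) = xs i)
    (hE2 : ∀ i j, 1 ≤ i → i ≤ mc → 1 ≤ j → j < c i → S (i, j) ≤ xs i) :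
    ∀ i, 1 ≤ i → i ≤ m → i ≤ r' ∧ xs' i < xs i ∧ (i ≤ mc → c' i ≤ c i) := by
  obtain ⟨hr1, hx1, hcl3, hcl4, hcl5⟩ := hIns1
  obtain ⟨hr1', hx1', hcl3', hcl4', hcl5'⟩ := hIns2
  intro i
  induction i with
  | zero => omega
  | succ n ih =>
    intro h1 hn1
    rcases Nat.eq_zero_or_pos n with hn | hn
    · -- base case i = 1
      subst hn
      refine ⟨hr1', by rw [hx1, hx1']; exact hxx, ?_⟩
      intro h1mc
      by_contra hcc
      push_neg at hcc
      have hc11 : 1 ≤ c 1 := (hcl3 1 le_rfl (by omega)).1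
      have := (hcl3' 1 le_rfl hr1').2.2.1 (c 1) hc11 hcc
      rw [hE1 1 le_rfl h1mc, hx1'] at this
      rw [hx1] at this
      omega
    · -- step : use the induction hypothesis at n
      obtain ⟨hnr', hxsn, hcn⟩ := ih hn (by omega)
      have hnmc : n ≤ mc := by omega
      have hcnn : c' n ≤ c n := hcn hnmc
      have hnr : n < r := by omega
      have hcnf : c n ≤ f n := (hcl4 n hn hnr).1
      have hgfn : g n = f n := hgf n hn (by omega)
      -- the second insertion does not stop at row n
      have hrn : n + 1 ≤ r' := by
        rcases Nat.lt_or_ge n r' with h | h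
        · omega
        · have hrr : r' = n := by omega
          have := hcl5'
          rw [hrr] at this
          omega
      -- letters comparison
      have hxs2 : xs' (n + 1) = S (n, c' n) := (hcl4' n hn (by omega)).2
      have hc1' : 1 ≤ c' n := (hcl3' n hn (by omega)).1
      have hbound : S (n, c' n) ≤ xs n := by
        rcases Nat.lt_or_ge (c' n) (c n) with h | h
        · exact hE2 n (c' n) hn hnmc hc1' h
        · have : c' n = c n := by omega
          rw [this, hE1 n hn hnmc]
      have hxsnn : xs (n + 1) = T (n, c n) := (hcl4 n hn hnr).2
      have hTbig : xs n < T (n, c n) := (hcl3 n hn (by omega)).2.2.2 hcnf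
      have hlt : xs' (n + 1) < xs (n + 1) := by
        rw [hxs2, hxsnn]
        omega
      refine ⟨hrn, hlt, ?_⟩
      -- route comparison at row n+1
      intro hmc1
      by_contra hcc
      push_neg at hcc
      have hc1n : 1 ≤ c (n + 1) := (hcl3 (n + 1) (by omega) (by omega)).1
      have := (hcl3' (n + 1) (by omega) hrn).2.2.1 (c (n + 1)) hc1n hcc
      rw [hE1 (n + 1) (by omega) hmc1] at this
      omega

/-- Column strictness of the punctured tableau `bereleMid T s c xs` away from the
first column. -/
private lemma bereleMid_col {f : ℕ → ℕ} {T : ℕ × ℕ → ℕ}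
    (hdec : ∀ i j, 1 ≤ i → i ≤ j → f j ≤ f i)
    (hT : PSSYT f ∅ T) {x r : ℕ} {c xs : ℕ → ℕ}
    (hIns : InsData f T x r c xs) {s : ℕ} (hsr : s ≤ r) :
    ∀ a b, (a, b) ∈ cells f → 2 ≤ a → 2 ≤ b →
      bereleMid T s c xs (a - 1, b) < bereleMid T s c xs (a, b) := by
  obtain ⟨hTtab, hTrow, hTcol⟩ := hT
  obtain ⟨hr1, hx1, hcl3, hcl4, hcl5⟩ := hIns
  have hcolT : ∀ a b, (a, b) ∈ cells f → 2 ≤ a → T (a - 1, b) < T (a, b) := by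
    intro a b hab ha2
    have h1 : ((a : ℕ) - 1, b) ∈ cells f :=
      mem_cells_mono hdec hab (by omega) (by omega) hab.2.1 le_rfl
    have := hTcol (a - 1) a b (by simpa using h1) (by simpa using hab) (by omega)
    exact this
  have hxslt : ∀ i, 1 ≤ i → i < r → xs i < xs (i + 1) := by
    intro i hi hir
    have h1 := (hcl4 i hi hir).2
    have h2 := (hcl3 i hi (by omega)).2.2.2 (hcl4 i hi hir).1
    omega
  -- the route is weakly decreasing
  have hcdec : ∀ a, 2 ≤ a → a ≤ r → c a ≤ c (a - 1) := by
    intro a ha2 har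
    by_contra hcc
    push_neg at hcc
    have ha1r : a - 1 < r := by omega
    have hca1 : 1 ≤ c (a - 1) := (hcl3 (a - 1) (by omega) (by omega)).1
    have hxsa : xs a = T (a - 1, c (a - 1)) := by
      have := (hcl4 (a - 1) (by omega) ha1r).2
      rwa [show (a : ℕ) - 1 + 1 = a by omega] at this
    rcases Nat.lt_or_ge (f a) (c (a - 1)) with h | h
    · have : c a ≤ f a + 1 := (hcl3 a (by omega) har).2.1
      omega
    · have hmem : ((a : ℕ), c (a - 1)) ∈ cells f := ⟨by omega, hca1, h⟩
      have hTle : T (a, c (a - 1)) ≤ xs a :=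
        (hcl3 a (by omega) har).2.2.1 (c (a - 1)) hca1 hcc
      have hcolstep : T (a - 1, c (a - 1)) < T (a, c (a - 1)) := hcolT a (c (a - 1)) hmem ha2
      omega
  intro a b hab ha2 hb2
  have hhole1 : ¬ ((a : ℕ), b) = ((s : ℕ) - 1, 1) := pair_ne_of_snd (by omega)
  have hhole2 : ¬ ((a : ℕ) - 1, b) = ((s : ℕ) - 1, 1) := pair_ne_of_snd (by omega)
  by_cases hra : 1 ≤ a ∧ a + 1 ≤ s ∧ b = c a
  · by_cases hrb : 1 ≤ (a : ℕ) - 1 ∧ (a - 1) + 1 ≤ s ∧ b = c (a - 1)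
    · -- both on the route
      rw [bereleMid, bereleMid, if_neg hhole1, if_neg hhole2, if_pos hra, if_pos hrb]
      show xs ((a : ℕ) - 1, b).1 < xs ((a : ℕ), b).1
      show xs ((a : ℕ) - 1) < xs a
      have := hxslt (a - 1) (by omega) (by omega)
      rwa [show (a : ℕ) - 1 + 1 = a by omega] at this
    · -- only the lower one on the route : T (a-1, b) < xs a
      rw [bereleMid, bereleMid, if_neg hhole1, if_neg hhole2, if_pos hra, if_neg hrb]
      show T ((a : ℕ) - 1, b) < xs a
      have hbne : b ≠ c (a - 1) := by
        intro hcon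
        exact hrb ⟨by omega, by omega, hcon⟩
      have har : a ≤ r := by omega
      have hle : c a ≤ c (a - 1) := hcdec a ha2 har
      have hblt : b < c (a - 1) := by
        rw [hra.2.2] at hbne ⊢
        omega
      have hT1 : T (a - 1, b) ≤ xs (a - 1) :=
        (hcl3 (a - 1) (by omega) (by omega)).2.2.1 b (by omega) hblt
      have := hxslt (a - 1) (by omega) (by omega)
      rw [show (a : ℕ) - 1 + 1 = a by omega] at this
      omega
  · by_cases hrb : 1 ≤ (a : ℕ) - 1 ∧ (a - 1) + 1 ≤ s ∧ b = c (a - 1)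
    · -- only the upper one on the route : xs (a-1) < T (a, b)
      rw [bereleMid, bereleMid, if_neg hhole1, if_neg hhole2, if_neg hra, if_pos hrb]
      show xs ((a : ℕ) - 1) < T (a, b)
      have ha1r : (a : ℕ) - 1 < r := by omega
      have hcf : c (a - 1) ≤ f (a - 1) := (hcl4 (a - 1) (by omega) ha1r).1
      have hmem1 : ((a : ℕ) - 1, b) ∈ cells f :=
        mem_cells_mono hdec hab (by omega) (by omega) (by omega) le_rfl
      have h1 : xs (a - 1) < T (a - 1, b) := by
        rw [hrb.2.2]
        exact (hcl3 (a - 1) (by omega) (by omega)).2.2.2 hcf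
      have h2 : T (a - 1, b) < T (a, b) := hcolT a b hab ha2
      omega
    · -- neither on the route
      rw [bereleMid, bereleMid, if_neg hhole1, if_neg hhole2, if_neg hra, if_neg hrb]
      exact hcolT a b hab ha2
theorem stmt16 (n : ℕ) (f : ℕ → ℕ) (hf : IsPartitionF f) (hfn : ∀ i, n < i → f i = 0)
    (T : ℕ × ℕ → ℕ) (hT : Symp f T) (hTe : EntriesLE f T (2 * n))
    (x x' : ℕ) (hx : 1 ≤ x) (hx' : 1 ≤ x') (hx2 : x ≤ 2 * n) (hx'2 : x' ≤ 2 * n)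
    (hxx : x' < x)
    (g : ℕ → ℕ) (S : ℕ × ℕ → ℕ) (ρ : ℕ ⊕ ℕ) (h1 : BereleT f T x g S ρ)
    (g' : ℕ → ℕ) (S' : ℕ × ℕ → ℕ) (ρ' : ℕ ⊕ ℕ) (h2 : BereleT g S x' g' S' ρ') :
    Rlt ρ ρ' := by
  obtain ⟨r, c, xs, hIns, hbr⟩ := h1
  have hr1 := hIns.1
  have hx1 := hIns.2.1
  have hcl3 := hIns.2.2.1
  have hcl4 := hIns.2.2.2.1
  have hcl5 := hIns.2.2.2.2
  rcases hbr with ⟨hsym1, hg, hS, hρ⟩ | ⟨s, hs1, hsr, hviol, hprev, H1, p1, hrtg1, hstop1, hg, hρ⟩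
  · -- unbarred case
    subst hρ hg hS
    obtain ⟨r', c', xs', hIns2, hbr2⟩ := h2
    rcases hbr2 with ⟨hsym2, hg', hS', hρ'⟩ |
      ⟨s2, hs21, hs2r, hviol2, hprev2, H2, p2, hrtg2, hstop2, hg', hρ'⟩
    · -- both unbarred : r < r'
      subst hρ'
      have key := ins_compare hIns hIns2 (le_refl r) (le_refl r) (by omega) hxx
        (fun i hi1 hir => by
          show Function.update f r (f r + 1) i = f i
          exact Function.update_of_ne (by omega) _ _)
        (fun i hi1 hir => by
          show insResult T r c xs (i, c i) = xs i
          rw [insResult, if_pos ⟨hi1, hir, rfl⟩])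
        (fun i j hi1 hir hj1 hjc => by
          show insResult T r c xs (i, j) ≤ xs i
          rw [insResult, if_neg (fun hcon => by
            have : j = c i := hcon.2.2
            omega)]
          exact (hcl3 i hi1 hir).2.2.1 j hj1 hjc)
      obtain ⟨hrr', _, hcc⟩ := key r hr1 (le_refl r)
      have hccr := hcc (le_refl r)
      have hcr : c r = f r + 1 := hcl5
      have hcl5' := hIns2.2.2.2.2
      have hrne : r' ≠ r := by
        intro hh
        rw [hh] at hcl5'
        rw [show addRow f r r = f r + 1 from Function.update_self _ _ _] at hcl5'
        omega
      refine ⟨?_, ?_⟩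
      · show r ≤ r'
        exact hrr'
      · intro hh
        have := Sum.inl.inj hh
        omega
    · -- second barred : trivial
      subst hρ'
      exact ⟨trivial, Sum.inl_ne_inr⟩
  · -- barred case
    subst hρ hg
    have hs2 : 2 ≤ s := by
      by_contra hh
      have hseq : s = 1 := by omega
      rw [hseq, hx1] at hviol
      omega
    have hs1r : (1 : ℕ) ≤ s - 1 := by omega
    have hs1lt : s - 1 < r := by omega
    obtain ⟨hcs1f, hxss0⟩ := hcl4 (s - 1) hs1r hs1lt
    have hxss : xs s = T (s - 1, c (s - 1)) := by
      rwa [show s - 1 + 1 = s by omega] at hxss0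
    have hxsmono : xs (s - 1) < xs s := by
      have := (hcl3 (s - 1) hs1r (by omega)).2.2.2 hcs1f
      omega
    have hxsle : xs (s - 1) ≤ 2 * s - 3 := by omega
    have hs3 : 3 ≤ s := by
      by_contra hh
      have hseq : s = 2 := by omega
      rw [hseq] at hxsle
      rw [show (2 : ℕ) - 1 = 1 by omega] at hxsle
      rw [hx1] at hxsle
      omega
    have hstart1 : ((s : ℕ) - 1, 1) ∈ cells f := by
      refine ⟨hs1r, le_rfl, ?_⟩
      show (1 : ℕ) ≤ f (s - 1)
      have := (hcl3 (s - 1) hs1r (by omega)).1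
      omega
    obtain ⟨R, hR0, hk, hq1, hp1cell, hfk, hRq, hRmono, hRexit, hRout⟩ :=
      slide1_facts hstart1 hrtg1 hstop1
    have hchain : ∀ b b', b ≤ b' → b' ≤ p1.2 → R b ≤ R b' := by
      intro b b' hbb hbq
      induction b' with
      | zero =>
        have : b = 0 := by omega
        rw [this]
      | succ m ih =>
        rcases Nat.lt_or_ge b (m + 1) with h | h
        · have h1 : R b ≤ R m := ih (by omega) (by omega)
          have h2 : R m ≤ R (m + 1) := hRmono m (by omega)
          omega
        · have : b = m + 1 := by omega
          rw [this]
    have hRlow : ∀ b, b ≤ p1.2 → s - 1 ≤ R b := by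
      intro b hb
      have := hchain 0 b (by omega) hb
      omega
    have hRchaink : ∀ b, b ≤ p1.2 → R b ≤ p1.1 := by
      intro b hb
      have := hchain b p1.2 hb le_rfl
      omega
    have hRpos : ∀ b, b ≤ p1.2 → 2 ≤ R b := by
      intro b hb
      have := hRlow b hb
      omega
    have hcg : ∀ z : ℕ × ℕ, z ∈ cells (rmRow f p1.1) ↔ z ∈ cells f ∧ z ≠ (p1.1, p1.2) := by
      intro z
      obtain ⟨za, zb⟩ := z
      by_cases hza : za = p1.1
      · subst hza
        simp only [mem_cells_iff, ne_eq, Prod.mk.injEq, rmRow]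
        rw [Function.update_self]
        constructor
        · rintro ⟨h1, h2, h3⟩
          have hq' := hfk
          exact ⟨⟨h1, h2, by omega⟩, by omega⟩
        · rintro ⟨⟨h1, h2, h3⟩, h4⟩
          have hq' := hfk
          refine ⟨h1, h2, ?_⟩
          have : ¬ zb = p1.2 := by tauto
          omega
      · simp only [mem_cells_iff, ne_eq, Prod.mk.injEq, rmRow]
        rw [Function.update_of_ne hza]
        constructor
        · rintro ⟨h1, h2, h3⟩
          exact ⟨⟨h1, h2, h3⟩, by tauto⟩
        · rintro ⟨⟨h1, h2, h3⟩, h4⟩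
          exact ⟨h1, h2, h3⟩
    have hSM : ∀ a b, 1 ≤ b → a ≤ s - 2 → S (a, b) = bereleMid T s c xs (a, b) := by
      intro a b hb1 ha
      apply hRout a b hb1
      rcases le_or_gt b p1.2 with h | h
      · refine Or.inl ⟨h, Or.inl ?_⟩
        have := hRlow (b - 1) (by omega)
        omega
      · exact Or.inr h
    obtain ⟨r', c', xs', hIns2, hbr2⟩ := h2
    have hr1' := hIns2.1
    have hx1' := hIns2.2.1
    have hcl3' := hIns2.2.2.1
    have hcl4' := hIns2.2.2.2.1
    have key := ins_compare (m := s - 1) (mc := s - 2) hIns hIns2 (by omega) (by omega)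
      (by omega) hxx
      (fun i hi1 hir => by
        show Function.update f p1.1 (f p1.1 - 1) i = f i
        exact Function.update_of_ne (by omega) _ _)
      (fun i hi1 hic => by
        have hci1 : 1 ≤ c i := (hcl3 i hi1 (by omega)).1
        rw [hSM i (c i) hci1 hic, bereleMid,
          if_neg (pair_ne_of_fst (by omega : i ≠ s - 1)),
          if_pos ⟨hi1, by omega, rfl⟩]
      )
      (fun i j hi1 hic hj1 hjc => by
        rw [hSM i j hj1 hic, bereleMid,
          if_neg (pair_ne_of_fst (by omega : i ≠ s - 1)),
          if_neg (fun hcon => by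
            have : j = c i := hcon.2.2
            omega)]
        exact (hcl3 i hi1 (by omega)).2.2.1 j hj1 hjc)
    obtain ⟨hs1r', hxs'lt1, -⟩ := key (s - 1) hs1r le_rfl
    have hviol2' : xs' (s - 1) < 2 * (s - 1) - 1 := by omega
    rcases hbr2 with ⟨hsym2, hg', hS', hρ'⟩ |
      ⟨s2, hs21, hs2r', hviol2, hprev2, H2, p2, hrtg2, hstop2, hg', hρ'⟩
    · exfalso
      have := hsym2 (s - 1) hs1r hs1r'
      omega
    · subst hρ'
      have hs2le : s2 ≤ s - 1 := by
        by_contra hh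
        have := hprev2 (s - 1) hs1r (by omega)
        omega
      have hs22 : 2 ≤ s2 := by
        by_contra hh
        have hseq : s2 = 1 := by omega
        rw [hseq, hx1'] at hviol2
        omega
      have hs2m1r' : s2 - 1 < r' := by omega
      obtain ⟨hc'le, hxs'eq0⟩ := hcl4' (s2 - 1) (by omega) hs2m1r'
      have hxs'eq : xs' s2 = S (s2 - 1, c' (s2 - 1)) := by
        rwa [show s2 - 1 + 1 = s2 by omega] at hxs'eq0
      have hxs'bump : xs' (s2 - 1) < xs' s2 := by
        have := (hcl3' (s2 - 1) (by omega) (by omega)).2.2.2 hc'le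
        omega
      have hstart2 : ((s2 : ℕ) - 1, 1) ∈ cells (rmRow f p1.1) := by
        refine ⟨by omega, le_rfl, ?_⟩
        show (1 : ℕ) ≤ rmRow f p1.1 (s2 - 1)
        have := (hcl3' (s2 - 1) (by omega) (by omega)).1
        omega
      have hMcol := bereleMid_col hf.1 hT.1 hIns hsr
      have hkey : ∀ b, 1 ≤ b → b < p1.2 →
          bereleMid S s2 c' xs' (R b - 1, b + 1) < bereleMid S s2 c' xs' (R b, b) := by
        intro b hb1 hbq
        have hRb : s - 1 ≤ R b := hRlow b (by omega)
        obtain ⟨hSRb, hcellRb⟩ := hRexit b hb1 hbq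
        have hMb : bereleMid S s2 c' xs' (R b, b) = S (R b, b) := by
          rw [bereleMid, if_neg (pair_ne_of_fst (by omega)),
            if_neg (fun hcon => by
              have h1 : R b + 1 ≤ s2 := by
                have := hcon.2.1
                omega
              omega)]
        rw [hMb, hSRb]
        have hMcolb : bereleMid T s c xs (R b - 1, b + 1) < bereleMid T s c xs (R b, b + 1) :=
          hMcol (R b) (b + 1) hcellRb (by omega) (by omega)
        by_cases hroute : 1 ≤ (R b : ℕ) - 1 ∧ (R b - 1) + 1 ≤ s2 ∧ b + 1 = c' (R b - 1)
        · have hRbs : R b = s - 1 := by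
            have h1 : R b ≤ s2 := by
              have := hroute.2.1
              omega
            omega
          have hs2s : s2 = s - 1 := by omega
          have hM2v : bereleMid S s2 c' xs' (R b - 1, b + 1) = xs' (R b - 1) := by
            rw [bereleMid, if_neg (pair_ne_of_snd (by omega)), if_pos hroute]
          rw [hM2v]
          have hcind : c' (s2 - 1) = b + 1 := by
            have := hroute.2.2
            rw [show (R b : ℕ) - 1 = s2 - 1 by omega] at this
            omega
          have hSval : S (s2 - 1, c' (s2 - 1)) = S (R b - 1, b + 1) := by
            rw [hcind, show s2 - 1 = (R b : ℕ) - 1 by omega]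
          have hSM2 : S (R b - 1, b + 1) = bereleMid T s c xs (R b - 1, b + 1) :=
            hSM (R b - 1) (b + 1) (by omega) (by omega)
          have hxval : xs' (R b - 1) = xs' (s2 - 1) := by
            rw [show (R b : ℕ) - 1 = s2 - 1 by omega]
          rw [hxval]
          rw [hxs'eq, hSval, hSM2] at hxs'bump
          omega
        · have hM2v : bereleMid S s2 c' xs' (R b - 1, b + 1) = S (R b - 1, b + 1) := by
            rw [bereleMid, if_neg (pair_ne_of_snd (by omega)), if_neg hroute]
          have hSm : S (R b - 1, b + 1) = bereleMid T s c xs (R b - 1, b + 1) := by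
            apply hRout (R b - 1) (b + 1) (by omega)
            refine Or.inl ⟨by omega, Or.inl ?_⟩
            rw [Nat.add_sub_cancel]
            omega
          rw [hM2v, hSm]
          exact hMcolb
      have hfin : p2.1 < p1.1 := by
        refine slide2_bound hf.1 (by omega) hq1 hfk hcg hRq hRchaink hRmono hRpos ?_
          (fun b h1 h2 => (hRexit b h1 h2).2) hkey hstart2 hrtg2
        have := hRlow 1 hq1
        omega
      refine ⟨?_, ?_⟩
      · show p2.1 ≤ p1.1
        omega
      · intro hh
        have := Sum.inr.inj hh
        omega
end
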